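/- arXiv:2101.00635 — 7 statements merged into one kernel-verified Lean document; each statement's English description precedes it below -/
import Mathlib

section
/- Define a sequence b : ℕ → ℝ by b(0) = 4^8/3^4 and, for n ≥ 1, b(n) = 13·n·b(n−1) + 4^{8+n}·(n+1)^2/3^4. Then for every n ≥ 0 one has the bound b(n) ≤ (n+2)!·13^n·(2^{16}/3^4)·e^{4/13}, where e^{4/13} = exp(4/13). -/
/-- The sequence `b` defined by `b 0 = 4^8/3^4` and
`b n = 13·n·b (n-1) + 4^(8+n)·(n+1)^2/3^4` for `n ≥ 1` satisfies the bound
`b n ≤ (n+2)!·13^n·(2^16/3^4)·e^(4/13)`. -/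
theorem bound_of_recurrence (b : ℕ → ℝ)
    (hb0 : b 0 = 4 ^ 8 / 3 ^ 4)
    (hb : ∀ n : ℕ, 1 ≤ n →
      b n = 13 * n * b (n - 1) + 4 ^ (8 + n) * ((n : ℝ) + 1) ^ 2 / 3 ^ 4) :
    ∀ n : ℕ, b n ≤ ((n + 2).factorial : ℝ) * 13 ^ n * (2 ^ 16 / 3 ^ 4) *
      Real.exp (4 / 13) := by
  have key : ∀ n : ℕ, b n ≤ ((n + 2).factorial : ℝ) * 13 ^ n * (2 ^ 16 / 3 ^ 4) *
      ∑ k ∈ Finset.range (n + 1), (4 / 13 : ℝ) ^ k / (k.factorial : ℝ) := by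
    intro n
    induction n with
    | zero => simp [hb0]; norm_num
    | succ n ih =>
      have hrec := hb (n + 1) (by omega)
      simp only [Nat.add_sub_cancel] at hrec
      rw [hrec, Finset.sum_range_succ]
      have hS : (0:ℝ) ≤ ∑ k ∈ Finset.range (n + 1), (4 / 13 : ℝ) ^ k / (k.factorial : ℝ) :=
        Finset.sum_nonneg fun k _ => by positivity
      have hfac : ((n + 1 + 2).factorial : ℝ) = ((n:ℝ) + 3) * ((n + 2).factorial : ℝ) := by
        have : (n + 1 + 2).factorial = (n + 3) * (n + 2).factorial := rfl
        rw [this]; push_cast; ring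
      have hfac2 : ((n + 2).factorial : ℝ) = ((n:ℝ) + 2) * ((n + 1).factorial : ℝ) := by
        have : (n + 2).factorial = (n + 2) * (n + 1).factorial := rfl
        rw [this]; push_cast; ring
      have hfpos : (0:ℝ) < ((n + 1).factorial : ℝ) := by positivity
      have h1 : 13 * ((n:ℝ) + 1) * b n ≤
          ((n + 1 + 2).factorial : ℝ) * 13 ^ (n + 1) * (2 ^ 16 / 3 ^ 4) *
            ∑ k ∈ Finset.range (n + 1), (4 / 13 : ℝ) ^ k / (k.factorial : ℝ) := by
        have step1 : 13 * ((n:ℝ) + 1) * b n ≤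
            13 * ((n:ℝ) + 1) * (((n + 2).factorial : ℝ) * 13 ^ n * (2 ^ 16 / 3 ^ 4) *
              ∑ k ∈ Finset.range (n + 1), (4 / 13 : ℝ) ^ k / (k.factorial : ℝ)) := by
          apply mul_le_mul_of_nonneg_left ih (by positivity)
        refine step1.trans ?_
        rw [hfac, pow_succ (13:ℝ) n]
        have hnn : ((n:ℝ) + 1) ≤ ((n:ℝ) + 3) := by linarith
        have hpos : (0:ℝ) ≤ ((n + 2).factorial : ℝ) * 13 ^ n * (2 ^ 16 / 3 ^ 4) *
            ∑ k ∈ Finset.range (n + 1), (4 / 13 : ℝ) ^ k / (k.factorial : ℝ) := by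
          have : (0:ℝ) ≤ ((n + 2).factorial : ℝ) * 13 ^ n * (2 ^ 16 / 3 ^ 4) := by positivity
          exact mul_nonneg this hS
        nlinarith [mul_le_mul_of_nonneg_right hnn hpos]
      have h2 : (4:ℝ) ^ (8 + (n + 1)) * (((n + 1 : ℕ):ℝ) + 1) ^ 2 / 3 ^ 4 ≤
          ((n + 1 + 2).factorial : ℝ) * 13 ^ (n + 1) * (2 ^ 16 / 3 ^ 4) *
            ((4 / 13 : ℝ) ^ (n + 1) / ((n + 1).factorial : ℝ)) := by
        rw [hfac, hfac2, div_pow]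
        push_cast
        have h13 : (0:ℝ) < (13:ℝ) ^ (n + 1) := by positivity
        have hRHS : ((n:ℝ) + 3) * (((n:ℝ) + 2) * ((n + 1).factorial : ℝ)) * 13 ^ (n + 1) *
              ((2:ℝ) ^ 16 / 3 ^ 4) * ((4:ℝ) ^ (n + 1) / 13 ^ (n + 1) / ((n + 1).factorial : ℝ))
            = ((n:ℝ) + 3) * ((n:ℝ) + 2) * (2 ^ 16 * 4 ^ (n + 1)) / 3 ^ 4 := by
          field_simp
        rw [hRHS]
        have h4 : (4:ℝ) ^ (8 + (n + 1)) = 2 ^ 16 * 4 ^ (n + 1) := by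
          rw [pow_add]; norm_num
        rw [h4]
        gcongr ?_ / _
        have hsq : ((n:ℝ) + 1 + 1) ^ 2 ≤ ((n:ℝ) + 2) * ((n:ℝ) + 3) := by nlinarith
        nlinarith [pow_pos (show (0:ℝ) < 4 by norm_num) (n+1),
          mul_le_mul_of_nonneg_left hsq (show (0:ℝ) ≤ (2:ℝ)^16 * 4^(n+1) by positivity)]
      calc 13 * ((n + 1 : ℕ):ℝ) * b n + (4:ℝ) ^ (8 + (n + 1)) * (((n + 1 : ℕ):ℝ) + 1) ^ 2 / 3 ^ 4
          ≤ ((n + 1 + 2).factorial : ℝ) * 13 ^ (n + 1) * (2 ^ 16 / 3 ^ 4) *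
              (∑ k ∈ Finset.range (n + 1), (4 / 13 : ℝ) ^ k / (k.factorial : ℝ))
            + ((n + 1 + 2).factorial : ℝ) * 13 ^ (n + 1) * (2 ^ 16 / 3 ^ 4) *
              ((4 / 13 : ℝ) ^ (n + 1) / ((n + 1).factorial : ℝ)) := by
            push_cast
            push_cast at h1 h2
            linarith
        _ = ((n + 1 + 2).factorial : ℝ) * 13 ^ (n + 1) * (2 ^ 16 / 3 ^ 4) *
              ((∑ k ∈ Finset.range (n + 1), (4 / 13 : ℝ) ^ k / (k.factorial : ℝ))
                + (4 / 13 : ℝ) ^ (n + 1) / ((n + 1).factorial : ℝ)) := by ring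
  intro n
  have hexp : ∑ k ∈ Finset.range (n + 1), (4 / 13 : ℝ) ^ k / (k.factorial : ℝ) ≤
      Real.exp (4 / 13) := by
    have := Real.sum_le_exp_of_nonneg (show (0:ℝ) ≤ 4/13 by norm_num) (n + 1)
    simpa using this
  refine (key n).trans ?_
  have : (0:ℝ) ≤ ((n + 2).factorial : ℝ) * 13 ^ n * (2 ^ 16 / 3 ^ 4) := by positivity
  exact mul_le_mul_of_nonneg_left hexp this
end

section
/- Let k ⊆ k' be fields and let A and B be commutative k-algebras, with k-algebra homomorphisms φ : A → k' and ψ : B → k'. Suppose that φ is injective and that, writing K ⊆ k' for the field of fractions of the image φ(A) inside k', the induced map K ⊗_k B → k' (determined by a ⊗ b ↦ a·ψ(b)) is injective. Then ψ is injective and, writing L ⊆ k' for the field of fractions of the image ψ(B) inside k', the induced map L ⊗_k A → k' (determined by b ⊗ a ↦ b·φ(a)) is injective. -/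
open scoped TensorProduct

set_option maxHeartbeats 1000000
set_option synthInstance.maxHeartbeats 400000

/-- Key lemma: injectivity of the product map on `K` tensor `B` passes to `K` tensor `L`,
where every element of `L` is a ratio of elements of the range of `ψ`. -/
theorem generic_core {k k' B : Type*} [Field k] [Field k'] [Algebra k k'] [CommRing B]
    [Algebra k B] (K L : IntermediateField k k') (ψ : B →ₐ[k] k')
    (hmem : ∀ b, ψ b ∈ L)
    (hL : ∀ l : k', l ∈ L → ∃ p q : B, ψ q ≠ 0 ∧ l = ψ p / ψ q)
    (h : Function.Injective (Algebra.TensorProduct.productMap K.val ψ)) :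
    Function.Injective (Algebra.TensorProduct.productMap K.val L.val) := by
  classical
  rw [injective_iff_map_eq_zero]
  intro x hx
  obtain ⟨s, rfl⟩ := TensorProduct.exists_finset x
  choose p q hq hpq using fun i : ↥K × ↥L => hL i.2 i.2.2
  let ψL : B →ₗ[k] L :=
    { toFun := fun b => ⟨ψ b, hmem b⟩
      map_add' := fun a b => Subtype.ext (by push_cast; exact map_add ψ a b)
      map_smul' := fun c b => Subtype.ext (by push_cast; exact map_smul ψ c b) }
  set Q : B := ∏ i ∈ s, q i with hQdef
  have hψQ : ψ Q = ∏ i ∈ s, ψ (q i) := map_prod ψ q s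
  have hψQne : ψ Q ≠ 0 := by
    rw [hψQ]
    exact Finset.prod_ne_zero_iff.mpr fun i _ => hq i
  set y : ↥K ⊗[k] B := ∑ i ∈ s, i.1 ⊗ₜ[k] (p i * ∏ j ∈ s.erase i, q j) with hydef
  have key : ∀ i ∈ s, ψ (p i * ∏ j ∈ s.erase i, q j) = (i.2 : k') * ψ Q := by
    intro i hi
    have hsplit : ψ Q = ψ (q i) * ∏ j ∈ s.erase i, ψ (q j) := by
      rw [hψQ]; exact (Finset.mul_prod_erase s (fun j => ψ (q j)) hi).symm
    rw [map_mul, map_prod, hpq i, hsplit, eq_comm, div_mul_eq_mul_div, div_eq_iff (hq i)]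
    ring
  have h1 : Algebra.TensorProduct.productMap K.val ψ y = 0 := by
    have heq : Algebra.TensorProduct.productMap K.val ψ y =
        ψ Q * Algebra.TensorProduct.productMap K.val L.val (∑ i ∈ s, i.1 ⊗ₜ[k] i.2) := by
      rw [hydef, map_sum, map_sum, Finset.mul_sum]
      refine Finset.sum_congr rfl fun i hi => ?_
      rw [Algebra.TensorProduct.productMap_apply_tmul,
        Algebra.TensorProduct.productMap_apply_tmul, key i hi, IntermediateField.coe_val,
        IntermediateField.coe_val]
      ring
    rw [heq, hx, mul_zero]
  have hy : y = 0 := h (by rw [h1, map_zero])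
  have hx0 : (∑ i ∈ s, i.1 ⊗ₜ[k] i.2) =
      LinearMap.lTensor ↥K (LinearMap.mulLeft k ((⟨ψ Q, hmem Q⟩ : ↥L)⁻¹))
        (LinearMap.lTensor ↥K ψL y) := by
    rw [hydef, map_sum, map_sum]
    refine Finset.sum_congr rfl fun i hi => ?_
    rw [LinearMap.lTensor_tmul, LinearMap.lTensor_tmul, LinearMap.mulLeft_apply]
    congr 1
    refine Subtype.ext ?_
    rw [show ((((⟨ψ Q, hmem Q⟩ : ↥L)⁻¹ * ψL (p i * ∏ j ∈ s.erase i, q j)) : ↥L) : k') =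
      ((⟨ψ Q, hmem Q⟩ : ↥L)⁻¹ : k') * ψ (p i * ∏ j ∈ s.erase i, q j) from rfl,
      key i hi]
    rw [show ((↑(⟨ψ Q, hmem Q⟩ : ↥L) : k'))⁻¹ = (ψ Q)⁻¹ from rfl, mul_comm (↑i.2 : k') (ψ Q),
      inv_mul_cancel_left₀ hψQne]
  rw [hx0, hy, map_zero, map_zero]

/-- `includeRight` into a tensor product is injective when the base is a field. -/
theorem generic_includeRight_inj {k k' B : Type*} [Field k] [Field k'] [Algebra k k']
    [CommRing B] [Algebra k B] (K : IntermediateField k k') :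
    Function.Injective (Algebra.TensorProduct.includeRight : B →ₐ[k] ↥K ⊗[k] B) := by
  have hg : Function.Injective (Algebra.linearMap k ↥K) := (algebraMap k ↥K).injective
  have h2 : Function.Injective ((Algebra.linearMap k ↥K).rTensor B) :=
    Module.Flat.rTensor_preserves_injective_linearMap _ hg
  have key : ∀ b : B, (Algebra.TensorProduct.includeRight : B →ₐ[k] ↥K ⊗[k] B) b =
      (Algebra.linearMap k ↥K).rTensor B ((TensorProduct.lid k B).symm b) := by
    intro b
    simp [TensorProduct.lid_symm_apply]
  intro a b hab
  rw [key, key] at hab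
  exact (TensorProduct.lid k B).symm.injective (h2 hab)

/-- Elements of the intermediate field generated by the range of `ψ` are ratios. -/
theorem generic_ratio {k k' B : Type*} [Field k] [Field k'] [Algebra k k'] [CommRing B]
    [Algebra k B] (ψ : B →ₐ[k] k') (l : k')
    (hl : l ∈ IntermediateField.adjoin k (Set.range ψ)) :
    ∃ p q : B, ψ q ≠ 0 ∧ l = ψ p / ψ q := by
  rw [IntermediateField.mem_adjoin_range_iff] at hl
  obtain ⟨r, s, rfl⟩ := hl
  have key : ∀ t : MvPolynomial B k, ψ (MvPolynomial.aeval id t) = MvPolynomial.aeval (⇑ψ) t :=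
    fun t => by rw [MvPolynomial.comp_aeval_apply]; rfl
  by_cases hs : MvPolynomial.aeval (⇑ψ) s = 0
  · exact ⟨0, 1, by simp, by simp [hs]⟩
  · exact ⟨MvPolynomial.aeval id r, MvPolynomial.aeval id s, by rw [key]; exact hs,
      by rw [key, key]⟩

/-- Swapping of geometric generic points (affine-algebra formulation of Lemma 3.4):
if `φ : A → k'` is injective and the induced map `K ⊗_k B → k'` is injective, where
`K` is the field of fractions of `φ(A)` inside `k'` (equivalently, the subfield of `k'`
generated over `k` by the image of `φ`), then `ψ : B → k'` is injective and the induced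
map `L ⊗_k A → k'` is injective, where `L` is the field of fractions of `ψ(B)` in `k'`. -/
theorem generic_point_swap (k k' : Type*) [Field k] [Field k'] [Algebra k k']
    (A B : Type*) [CommRing A] [CommRing B] [Algebra k A] [Algebra k B]
    (φ : A →ₐ[k] k') (ψ : B →ₐ[k] k')
    (hφ : Function.Injective φ)
    (h : Function.Injective
      (Algebra.TensorProduct.productMap (IntermediateField.adjoin k (Set.range φ)).val ψ)) :
    Function.Injective ψ ∧
      Function.Injective
        (Algebra.TensorProduct.productMap (IntermediateField.adjoin k (Set.range ψ)).val φ) := by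
  set K := IntermediateField.adjoin k (Set.range φ) with hK
  set L := IntermediateField.adjoin k (Set.range ψ) with hLdef
  have hmemL : ∀ b, ψ b ∈ L := fun b =>
    IntermediateField.subset_adjoin k (Set.range ψ) ⟨b, rfl⟩
  have hmemK : ∀ a, φ a ∈ K := fun a =>
    IntermediateField.subset_adjoin k (Set.range φ) ⟨a, rfl⟩
  -- ψ is injective
  have hψ : Function.Injective ψ := by
    have hcomp := Algebra.TensorProduct.productMap_right K.val ψ
    rw [← hcomp, AlgHom.coe_comp]
    exact h.comp (generic_includeRight_inj (B := B) K)
  refine ⟨hψ, ?_⟩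
  -- linear disjointness: K ⊗ L → k' injective
  have hKL : Function.Injective (Algebra.TensorProduct.productMap K.val L.val) :=
    generic_core K L ψ hmemL (fun l hl => generic_ratio ψ l hl) h
  -- swap: L ⊗ K → k' injective
  have hLK : Function.Injective (Algebra.TensorProduct.productMap L.val K.val) := by
    have hsw : ∀ z : ↥L ⊗[k] ↥K, Algebra.TensorProduct.productMap L.val K.val z =
        Algebra.TensorProduct.productMap K.val L.val (TensorProduct.comm k ↥L ↥K z) := by
      intro z
      induction z using TensorProduct.induction_on with
      | zero => simp
      | tmul l c => simp [mul_comm]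
      | add u v hu hv => rw [map_add, map_add, map_add, hu, hv]
    intro a b hab
    rw [hsw, hsw] at hab
    exact (TensorProduct.comm k ↥L ↥K).injective (hKL hab)
  -- corestriction of φ to K
  let φ' : A →ₗ[k] ↥K :=
    { toFun := fun a => ⟨φ a, hmemK a⟩
      map_add' := fun a b => Subtype.ext (by push_cast; exact map_add φ a b)
      map_smul' := fun c a => Subtype.ext (by push_cast; exact map_smul φ c a) }
  have hφ' : Function.Injective φ' := fun a b hab => hφ (congrArg Subtype.val hab)
  have hT : Function.Injective (LinearMap.lTensor ↥L φ') :=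
    Module.Flat.lTensor_preserves_injective_linearMap _ hφ'
  have keyz : ∀ z : ↥L ⊗[k] A, Algebra.TensorProduct.productMap L.val φ z =
      Algebra.TensorProduct.productMap L.val K.val (LinearMap.lTensor ↥L φ' z) := by
    intro z
    induction z using TensorProduct.induction_on with
    | zero => simp
    | tmul l a =>
      rw [LinearMap.lTensor_tmul, Algebra.TensorProduct.productMap_apply_tmul,
        Algebra.TensorProduct.productMap_apply_tmul]
      rfl
    | add u v hu hv => rw [map_add, map_add, map_add, hu, hv]
  intro a b hab
  rw [keyz, keyz] at hab
  exact hT (hLK hab)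
end

section
/- Let k ⊆ K be fields and let 0 ≤ m ≤ n be integers. Let a be an (n+1)×(m+1) matrix with entries in k of rank m+1, and let g be an (n+1)×(n+1) matrix with entries in K whose (n+1)^2 entries form an algebraically independent family over k. Then the (n+1)(m+1) entries of the product matrix g·a form an algebraically independent family over k. -/
open MvPolynomial

/-- A matrix of full column rank over a field has a left inverse. -/
lemma generic_mixing_aux_left_inverse (k : Type*) [Field k] (n m : ℕ)
    (a : Matrix (Fin (n + 1)) (Fin (m + 1)) k) (ha : a.rank = m + 1) :
    ∃ c : Matrix (Fin (m + 1)) (Fin (n + 1)) k, c * a = 1 := by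
  have hinj : Function.Injective a.mulVecLin := by
    have h := a.mulVecLin.finrank_range_add_finrank_ker
    rw [Matrix.rank] at ha
    simp [ha, Module.finrank_fin_fun] at h
    rw [← LinearMap.ker_eq_bot]
    exact h
  obtain ⟨f, hf⟩ := a.mulVecLin.exists_leftInverse_of_injective
    (LinearMap.ker_eq_bot.mpr hinj)
  refine ⟨LinearMap.toMatrix' f, ?_⟩
  have : LinearMap.toMatrix' (f.comp a.mulVecLin) = LinearMap.toMatrix' f * a := by
    rw [LinearMap.toMatrix'_comp]
    congr 1
    rw [← Matrix.toLin'_apply', LinearMap.toMatrix'_toLin']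
  rw [hf] at this
  simpa using this.symm

/-- Algebraic-independence formulation of Lemma 3.5: if `a` is an `(n+1)×(m+1)` matrix
over `k` of rank `m+1` and `g` is an `(n+1)×(n+1)` matrix over a field extension `K`
whose entries are algebraically independent over `k`, then the entries of `g·a` are
algebraically independent over `k`. -/
theorem generic_mixing (k K : Type*) [Field k] [Field K] [Algebra k K]
    (n m : ℕ) (hmn : m ≤ n)
    (a : Matrix (Fin (n + 1)) (Fin (m + 1)) k) (ha : a.rank = m + 1)
    (g : Matrix (Fin (n + 1)) (Fin (n + 1)) K)
    (hg : AlgebraicIndependent k (fun p : Fin (n + 1) × Fin (n + 1) => g p.1 p.2)) :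
    AlgebraicIndependent k
      (fun p : Fin (n + 1) × Fin (m + 1) => (g * a.map (algebraMap k K)) p.1 p.2) := by
  obtain ⟨c, hc⟩ := generic_mixing_aux_left_inverse k n m a ha
  -- substitution X_(i,j) ↦ ∑ l, a l j • X_(i,l)
  set σ : MvPolynomial (Fin (n + 1) × Fin (m + 1)) k →ₐ[k]
      MvPolynomial (Fin (n + 1) × Fin (n + 1)) k :=
    aeval (fun p : Fin (n + 1) × Fin (m + 1) =>
      ∑ l : Fin (n + 1), C (a l p.2) * X (p.1, l)) with hσ
  -- its left inverse, built from c
  set τ : MvPolynomial (Fin (n + 1) × Fin (n + 1)) k →ₐ[k]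
      MvPolynomial (Fin (n + 1) × Fin (m + 1)) k :=
    aeval (fun q : Fin (n + 1) × Fin (n + 1) =>
      ∑ j : Fin (m + 1), C (c j q.2) * X (q.1, j)) with hτ
  have hστ : τ.comp σ = AlgHom.id k _ := by
    apply MvPolynomial.algHom_ext
    intro p
    simp only [AlgHom.comp_apply, AlgHom.id_apply, hσ, hτ, aeval_X, map_sum, map_mul,
      aeval_C, algebraMap_eq, Finset.mul_sum]
    rw [Finset.sum_comm]
    have : ∀ j : Fin (m + 1),
        ∑ l : Fin (n + 1), C (a l p.2) * (C (c j l) * X (p.1, j))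
          = C ((c * a) j p.2) * X (p.1, j) := by
      intro j
      rw [Matrix.mul_apply, map_sum, Finset.sum_mul]
      congr 1
      ext l
      rw [← mul_assoc, ← map_mul, mul_comm (a l p.2)]
    simp_rw [this, hc]
    rcases eq_or_ne p.2 with h
    simp [Matrix.one_apply, Finset.sum_ite_eq' Finset.univ p.2 (fun j => X (p.1, j))]
  have hσinj : Function.Injective σ := by
    intro x y hxy
    have := congrArg τ hxy
    have h1 := congrArg (fun φ => φ x) hστ
    have h2 := congrArg (fun φ => φ y) hστ
    simp only [AlgHom.comp_apply, AlgHom.id_apply] at h1 h2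
    rw [← h1, ← h2, this]
  rw [algebraicIndependent_iff_injective_aeval] at hg ⊢
  have key : (aeval (fun p : Fin (n + 1) × Fin (m + 1) =>
      (g * a.map (algebraMap k K)) p.1 p.2) :
        MvPolynomial (Fin (n + 1) × Fin (m + 1)) k →ₐ[k] K)
      = (aeval (fun p : Fin (n + 1) × Fin (n + 1) => g p.1 p.2)).comp σ := by
    apply MvPolynomial.algHom_ext
    intro p
    simp only [AlgHom.comp_apply, hσ, aeval_X, map_sum, map_mul, aeval_C]
    rw [Matrix.mul_apply]
    congr 1
    ext l
    rw [Matrix.map_apply, mul_comm]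
  rw [key]
  exact hg.comp hσinj
end

section
/- Let k ⊆ k' be fields and let 0 ≤ m ≤ n be integers. Let a be an (n+1)×(m+1) matrix over k' of rank m+1; let g be an (n+1)×(n+1) matrix over k' whose entries form an algebraically independent family over the subfield k(a) of k' generated over k by the entries of a; and let h be an (m+1)×(m+1) matrix over k' whose entries form an algebraically independent family over the subfield k(a,g) generated over k by the entries of a and g. (Then g and h are invertible, since their determinants are nonzero polynomials evaluated at algebraically independent elements.) Set b = g·a·h^{-1}. Then the entries of b form an algebraically independent family over the subfield k(a,h) generated over k by the entries of a and h, and the entries of h form an algebraically independent family over the subfield k(a,b) generated over k by the entries of a and b. -/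
/-!
Over `K = k(a)` the hypotheses say that the entries of `g` and `h` together are algebraically
independent, so by the symmetry of this condition `g` is generic over `k(a,h)`. The matrix
`a h⁻¹` has entries in `k(a,h)` and, having full column rank, a left inverse there; hence
`b = g (a h⁻¹)` arises from `g` by an injective linear substitution of the variables and is
generic over `k(a,h)`. Exchanging once more, `h` is generic over `k(a,b)`. Invertibility of `g`
and `h` holds because the determinant is a nonzero polynomial in the entries.
-/

open Function Matrix MvPolynomial Set

namespace Matrix

variable {m n : Type*}

theorem mulVec_injective_of_rank_eq_card {K : Type*} [Field K] [Fintype n] {A : Matrix m n K}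
    (hA : A.rank = Fintype.card n) : Injective A.mulVec := by
  rw [mulVec_injective_iff, linearIndependent_iff_card_eq_finrank_span, ← hA,
    rank_eq_finrank_span_cols]
  rfl

theorem mulVec_injective_of_map {R S : Type*} [Semiring R] [Semiring S] [Fintype n]
    {f : R →+* S} (hf : Injective f) {A : Matrix m n R} (hA : Injective (A.map f).mulVec) :
    Injective A.mulVec := by
  intro v w hvw
  have : (A.map f).mulVec (f ∘ v) = (A.map f).mulVec (f ∘ w) := by
    ext i
    rw [← RingHom.map_mulVec, ← RingHom.map_mulVec, hvw]
  exact hf.comp_left (hA this)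

theorem exists_mul_eq_one_of_mulVec_injective {K : Type*} [Field K] [Fintype m] [Fintype n]
    [DecidableEq n] {A : Matrix m n K} (hA : Injective A.mulVec) :
    ∃ B : Matrix n m K, B * A = 1 := by
  classical
  obtain ⟨f, hf⟩ := LinearMap.exists_leftInverse_of_injective A.mulVecLin
    (LinearMap.ker_eq_bot.mpr hA)
  refine ⟨LinearMap.toMatrix' f, ?_⟩
  simpa [← toLin'_apply', LinearMap.toMatrix'_comp] using congrArg LinearMap.toMatrix' hf

theorem map_nonsing_inv {R S : Type*} [CommRing R] [CommRing S] [Fintype n] [DecidableEq n]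
    (f : R →+* S) {A : Matrix n n R} (hA : IsUnit A.det) : A⁻¹.map f = (A.map f)⁻¹ := by
  refine (inv_eq_left_inv ?_).symm
  rw [← Matrix.map_mul, nonsing_inv_mul _ hA, Matrix.map_one _ f.map_zero f.map_one]

end Matrix

namespace AlgebraicIndependent

variable {R A : Type*} [CommRing R] [CommRing A] [Algebra R A]

theorem det_ne_zero [Nontrivial R] {n : Type*} [Fintype n] [DecidableEq n] {g : Matrix n n A}
    (hg : AlgebraicIndependent R fun p : n × n => g p.1 p.2) : g.det ≠ 0 := by
  rw [← mvPolynomialX_mapMatrix_aeval R g, ← AlgHom.map_det]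
  exact fun h => det_mvPolynomialX_ne_zero n R (hg.eq_zero_of_aeval_eq_zero _ h)

theorem mul_map_of_mul_eq_one {ι ρ σ : Type*} [Fintype ρ] [Fintype σ] [DecidableEq σ]
    {g : Matrix ι ρ A} (hg : AlgebraicIndependent R fun p : ι × ρ => g p.1 p.2) {M : Matrix ρ σ R}
    {L : Matrix σ ρ R} (hLM : L * M = 1) :
    AlgebraicIndependent R fun p : ι × σ => (g * M.map (algebraMap R A)) p.1 p.2 := by
  classical
  -- `φ : X ↦ X M` has the left inverse `ψ : X ↦ X L`, and `aeval g ∘ φ = aeval (g M)`.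
  let P := mvPolynomialX ι ρ R * M.map (algebraMap R (MvPolynomial (ι × ρ) R))
  let Q := mvPolynomialX ι σ R * L.map (algebraMap R (MvPolynomial (ι × σ) R))
  let φ : MvPolynomial (ι × σ) R →ₐ[R] MvPolynomial (ι × ρ) R := aeval fun p => P p.1 p.2
  let ψ : MvPolynomial (ι × ρ) R →ₐ[R] MvPolynomial (ι × σ) R := aeval fun p => Q p.1 p.2
  have hψφ : ψ.comp φ = AlgHom.id R _ := by
    have hX : (mvPolynomialX ι ρ R).map ψ = Q := by
      ext i r : 2
      simp [ψ]
    have hC : ⇑ψ ∘ algebraMap R _ = algebraMap R _ := funext ψ.commutes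
    have key : P.map ψ = mvPolynomialX ι σ R := by
      rw [Matrix.map_mul, hX, Matrix.map_map, hC, Matrix.mul_assoc, ← Matrix.map_mul, hLM,
        Matrix.map_one _ (map_zero _) (map_one _), Matrix.mul_one]
    ext ⟨i, j⟩ : 1
    simpa [φ] using congrFun (congrFun key i) j
  have hφ : (aeval fun p : ι × ρ => g p.1 p.2).comp φ =
      aeval fun p : ι × σ => (g * M.map (algebraMap R A)) p.1 p.2 := by
    ext ⟨i, j⟩
    simp [φ, P, Matrix.mul_apply]
  rw [algebraicIndependent_iff_injective_aeval] at hg ⊢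
  rw [← hφ, AlgHom.coe_comp]
  exact hg.comp (LeftInverse.injective (g := ψ) fun p => congrArg (· p) hψφ)

end AlgebraicIndependent

theorem IntermediateField.algebraicIndependent_adjoin_union_iff {F E ι : Type*} [Field F]
    [Field E] [Algebra F E] (S T : Set E) {y : ι → E} :
    AlgebraicIndependent (IntermediateField.adjoin F (S ∪ T)) y ↔
      AlgebraicIndependent (IntermediateField.adjoin (IntermediateField.adjoin F S) T) y := by
  rw [← IntermediateField.adjoin_adjoin_left]
  -- `restrictScalars` leaves the underlying subfield, hence its algebra structure, unchanged.
  rfl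

namespace AlgebraicIndependent

variable {F E ι κ : Type*} [Field F] [Field E] [Algebra F E]

theorem adjoin_symm {x : ι → E} {y : κ → E} (hx : AlgebraicIndependent F x)
    (hy : AlgebraicIndependent (IntermediateField.adjoin F (range x)) y) :
    AlgebraicIndependent F y ∧ AlgebraicIndependent (IntermediateField.adjoin F (range y)) x := by
  rw [IntermediateField.algebraicIndependent_adjoin_iff] at hy ⊢
  have hyx : AlgebraicIndependent F (Sum.elim y x) := sumElim_iff.mpr ⟨hx, hy⟩
  exact sumElim_iff.mp (by simpa using hyx.comp Sum.swap Sum.swap_leftInverse.injective)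

theorem mul_mul_inv_of_mem {ρ : Type*} [Fintype ι] [Fintype ρ] [DecidableEq ρ]
    {K : IntermediateField F E} {g : Matrix ι ι E}
    (hg : AlgebraicIndependent K fun p : ι × ι => g p.1 p.2) {a : Matrix ι ρ E}
    (ha : a.rank = Fintype.card ρ) (haK : ∀ i j, a i j ∈ K) {h : Matrix ρ ρ E}
    (hh : h.det ≠ 0) (hhK : ∀ i j, h i j ∈ K) :
    AlgebraicIndependent K fun p : ι × ρ => (g * a * h⁻¹) p.1 p.2 := by
  obtain ⟨a, rfl⟩ : ∃ a' : Matrix ι ρ K, a'.map (algebraMap K E) = a :=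
    ⟨.of fun i j => ⟨a i j, haK i j⟩, rfl⟩
  obtain ⟨h, rfl⟩ : ∃ h' : Matrix ρ ρ K, h'.map (algebraMap K E) = h :=
    ⟨.of fun i j => ⟨h i j, hhK i j⟩, rfl⟩
  have hdet : IsUnit h.det := isUnit_iff_ne_zero.mpr fun h0 => hh <| by
    rw [← RingHom.mapMatrix_apply, ← RingHom.map_det, h0, map_zero]
  obtain ⟨L, hL⟩ := exists_mul_eq_one_of_mulVec_injective <|
    mulVec_injective_of_map (algebraMap K E).injective (mulVec_injective_of_rank_eq_card ha)
  rw [← map_nonsing_inv _ hdet]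
  exact (hg.mul_map_of_mul_eq_one hL).mul_map_of_mul_eq_one (mul_nonsing_inv h hdet)

end AlgebraicIndependent

theorem generic_conjugation_general (k k' : Type*) [Field k] [Field k'] [Algebra k k']
    (n m : ℕ)
    (a : Matrix (Fin (n + 1)) (Fin (m + 1)) k') (ha : a.rank = m + 1)
    (g : Matrix (Fin (n + 1)) (Fin (n + 1)) k')
    (h : Matrix (Fin (m + 1)) (Fin (m + 1)) k')
    (hg : AlgebraicIndependent
      (IntermediateField.adjoin k (Set.range fun p : Fin (n + 1) × Fin (m + 1) => a p.1 p.2))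
      (fun p : Fin (n + 1) × Fin (n + 1) => g p.1 p.2))
    (hh : AlgebraicIndependent
      (IntermediateField.adjoin k
        ((Set.range fun p : Fin (n + 1) × Fin (m + 1) => a p.1 p.2) ∪
          (Set.range fun p : Fin (n + 1) × Fin (n + 1) => g p.1 p.2)))
      (fun p : Fin (m + 1) × Fin (m + 1) => h p.1 p.2)) :
    IsUnit g.det ∧ IsUnit h.det ∧
      AlgebraicIndependent
        (IntermediateField.adjoin k
          ((Set.range fun p : Fin (n + 1) × Fin (m + 1) => a p.1 p.2) ∪
            (Set.range fun p : Fin (m + 1) × Fin (m + 1) => h p.1 p.2)))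
        (fun p : Fin (n + 1) × Fin (m + 1) => (g * a * h⁻¹) p.1 p.2) ∧
      AlgebraicIndependent
        (IntermediateField.adjoin k
          ((Set.range fun p : Fin (n + 1) × Fin (m + 1) => a p.1 p.2) ∪
            (Set.range fun p : Fin (n + 1) × Fin (m + 1) => (g * a * h⁻¹) p.1 p.2)))
        (fun p : Fin (m + 1) × Fin (m + 1) => h p.1 p.2) := by
  rw [IntermediateField.algebraicIndependent_adjoin_union_iff] at hh
  obtain ⟨hhKa, hgKah⟩ := hg.adjoin_symm hh
  have hb := hgKah.mul_mul_inv_of_mem (a := a) (h := h) (by rw [ha, Fintype.card_fin])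
    (fun i j => IntermediateField.algebraMap_mem _
      (⟨a i j, IntermediateField.subset_adjoin _ _ (mem_range_self (i, j))⟩ :
        IntermediateField.adjoin k _))
    hh.det_ne_zero (fun i j => IntermediateField.subset_adjoin _ _ (mem_range_self (i, j)))
  rw [IntermediateField.algebraicIndependent_adjoin_union_iff,
    IntermediateField.algebraicIndependent_adjoin_union_iff]
  exact ⟨hg.det_ne_zero.isUnit, hh.det_ne_zero.isUnit, hb, (hhKa.adjoin_symm hb).2⟩

/-- Algebraic-independence formulation of Lemma 3.6: with `a` of maximal rank over `k'`,
`g` generic over `k(a)` and `h` generic over `k(a,g)`, the matrices `g` and `h` are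
invertible and, setting `b = g·a·h⁻¹`, the entries of `b` are algebraically independent
over `k(a,h)` and the entries of `h` are algebraically independent over `k(a,b)`. -/
theorem generic_conjugation (k k' : Type*) [Field k] [Field k'] [Algebra k k']
    (n m : ℕ) (hmn : m ≤ n)
    (a : Matrix (Fin (n + 1)) (Fin (m + 1)) k') (ha : a.rank = m + 1)
    (g : Matrix (Fin (n + 1)) (Fin (n + 1)) k')
    (h : Matrix (Fin (m + 1)) (Fin (m + 1)) k')
    (hg : AlgebraicIndependent
      (IntermediateField.adjoin k (Set.range fun p : Fin (n + 1) × Fin (m + 1) => a p.1 p.2))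
      (fun p : Fin (n + 1) × Fin (n + 1) => g p.1 p.2))
    (hh : AlgebraicIndependent
      (IntermediateField.adjoin k
        ((Set.range fun p : Fin (n + 1) × Fin (m + 1) => a p.1 p.2) ∪
          (Set.range fun p : Fin (n + 1) × Fin (n + 1) => g p.1 p.2)))
      (fun p : Fin (m + 1) × Fin (m + 1) => h p.1 p.2)) :
    IsUnit g.det ∧ IsUnit h.det ∧
      AlgebraicIndependent
        (IntermediateField.adjoin k
          ((Set.range fun p : Fin (n + 1) × Fin (m + 1) => a p.1 p.2) ∪
            (Set.range fun p : Fin (m + 1) × Fin (m + 1) => h p.1 p.2)))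
        (fun p : Fin (n + 1) × Fin (m + 1) => (g * a * h⁻¹) p.1 p.2) ∧
      AlgebraicIndependent
        (IntermediateField.adjoin k
          ((Set.range fun p : Fin (n + 1) × Fin (m + 1) => a p.1 p.2) ∪
            (Set.range fun p : Fin (n + 1) × Fin (m + 1) => (g * a * h⁻¹) p.1 p.2)))
        (fun p : Fin (m + 1) × Fin (m + 1) => h p.1 p.2) :=
  generic_conjugation_general k k' n m a ha g h hg hh
end

section
/- Let k ⊆ K be fields and n ≥ 0 an integer. Let g be an (n+1)×(n+1) matrix over K and let λ_1, …, λ_{n+1} be elements of K such that the family consisting of the (n+1)^2 entries of g together with λ_1, …, λ_{n+1} is algebraically independent over k. Then for every integer 0 ≤ m ≤ n+1, the (n+1)^2 entries of the matrix g·Diag(1,…,1,λ_{m+1},…,λ_{n+1}) form an algebraically independent family over k, where Diag(1,…,1,λ_{m+1},…,λ_{n+1}) is the diagonal matrix whose first m diagonal entries are 1 and whose remaining diagonal entries are λ_{m+1},…,λ_{n+1}. -/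
/-!
Over the field `k(λ)`, the entries of `g` remain algebraically independent, since together with
the `λ`'s they are independent over `k`. Multiplying each entry by a nonzero constant `1` or `λⱼ`
of that field preserves algebraic independence over `k(λ)`, hence over `k`.
-/

open MvPolynomial Set

namespace AlgebraicIndependent

theorem units_smul {ι R A : Type*} [CommRing R] [CommRing A] [Algebra R A] {x : ι → A}
    (hx : AlgebraicIndependent R x) (w : ι → Rˣ) : AlgebraicIndependent R (w • x) := by
  let scale (u : ι → Rˣ) : MvPolynomial ι R →ₐ[R] MvPolynomial ι R :=
    aeval fun i ↦ C (u i : R) * X i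
  have scale_inv_comp : (scale w⁻¹).comp (scale w) = AlgHom.id R _ :=
    algHom_ext fun i ↦ by
      rw [AlgHom.comp_apply, aeval_X, map_mul, aeval_C, aeval_X, algebraMap_eq, ← mul_assoc,
        ← C_mul, Pi.inv_apply, Units.mul_inv, C_1, one_mul, AlgHom.id_apply]
  have aeval_smul : aeval (w • x) = (aeval x).comp (scale w) :=
    algHom_ext fun i ↦ by simp [scale, Units.smul_def, Algebra.smul_def]
  rw [AlgebraicIndependent, aeval_smul, AlgHom.coe_comp]
  exact Function.Injective.comp hx (Function.LeftInverse.injective (g := scale w⁻¹) fun P ↦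
    congr($scale_inv_comp P))

open scoped IntermediateField.algebraAdjoinAdjoin in
theorem of_sumElim_over_adjoin {ι κ F E : Type*} [Field F] [Field E] [Algebra F E]
    {x : ι → E} {y : κ → E} (h : AlgebraicIndependent F (Sum.elim x y)) :
    AlgebraicIndependent (IntermediateField.adjoin F (range y)) x :=
  (sumElim_iff.mp h).2.extendScalars _

theorem mul_of_sumElim {ι κ F E : Type*} [Field F] [Field E] [Algebra F E]
    {x : ι → E} {y : κ → E} (h : AlgebraicIndependent F (Sum.elim x y)) {c : ι → E}
    (hc : ∀ i, c i ∈ IntermediateField.adjoin F (range y)) (hc0 : ∀ i, c i ≠ 0) :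
    AlgebraicIndependent F fun i ↦ x i * c i := by
  let w (i : ι) : (IntermediateField.adjoin F (range y))ˣ :=
    Units.mk0 ⟨c i, hc i⟩ (Subtype.coe_ne_coe.mp (hc0 i))
  have := (h.of_sumElim_over_adjoin.units_smul w).restrictScalars (algebraMap F _).injective
  convert this using 1
  ext i
  simp [w, Units.smul_def, Algebra.smul_def, mul_comm]

end AlgebraicIndependent

/-- Algebraic-independence formulation of Lemma 3.7(2): if the entries of `g` together
with `λ₁,…,λ_{n+1}` are algebraically independent over `k`, then for every
`0 ≤ m ≤ n+1` the entries of `g·Diag(1,…,1,λ_{m+1},…,λ_{n+1})` (first `m` diagonal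
entries equal to `1`, remaining entries `λ_{m+1},…,λ_{n+1}`) are algebraically
independent over `k`. -/
theorem generic_partial_diagonal (k K : Type*) [Field k] [Field K] [Algebra k K]
    (n : ℕ) (g : Matrix (Fin (n + 1)) (Fin (n + 1)) K) (lam : Fin (n + 1) → K)
    (h : AlgebraicIndependent k
      (Sum.elim (fun p : Fin (n + 1) × Fin (n + 1) => g p.1 p.2) lam)) :
    ∀ m : ℕ, m ≤ n + 1 →
      AlgebraicIndependent k
        (fun p : Fin (n + 1) × Fin (n + 1) =>
          (g * Matrix.diagonal (fun i : Fin (n + 1) =>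
            if (i : ℕ) < m then 1 else lam i)) p.1 p.2) := by
  intro m _
  simp only [Matrix.mul_diagonal]
  refine h.mul_of_sumElim (fun p ↦ ?_) (fun p ↦ ?_)
  · split_ifs
    · exact one_mem _
    · exact IntermediateField.subset_adjoin _ _ (mem_range_self _)
  · split_ifs
    · exact one_ne_zero
    · exact h.ne_zero (Sum.inr p.2)
end

section
/- Let k ⊆ K be fields, n ≥ 0 an integer, and let m, m' be integers with 0 ≤ m, m' ≤ n and m + m' ≥ n. Let a be an (n+1)×(m+1) matrix and a' an (n+1)×(m'+1) matrix, both with entries in K, such that the family of all entries of a and a' together is algebraically independent over k. Then the intersection of the column space of a and the column space of a' in K^{n+1} has dimension m + m' + 1 − n, and there exists an (n+1)×(m+m'−n+1) matrix b with entries in K whose entries form an algebraically independent family over k and whose column space equals the intersection of the column spaces of a and a'. -/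
open Matrix MvPolynomial
set_option linter.unusedSectionVars false

noncomputable section GenericIntersectionAux

variable {n m m' : ℕ}

/-- Column-index equivalence splitting `Fin (n+1)` as `Fin (m+1) ⊕ Fin (n-m)`. -/
def genL (hm : m ≤ n) : Fin (m + 1) ⊕ Fin (n - m) ≃ Fin (n + 1) :=
  finSumFinEquiv.trans (finCongr (by omega))

/-- Column-index equivalence splitting `Fin (m'+1)` as `Fin (n-m) ⊕ Fin (m+m'-n+1)`. -/
def genR (hm : m ≤ n) (hsum : n ≤ m + m') :
    Fin (n - m) ⊕ Fin (m + m' - n + 1) ≃ Fin (m' + 1) :=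
  finSumFinEquiv.trans (finCongr (by omega))

variable {S S' : Type*} [CommRing S] [CommRing S']

/-- Generic splitting of a matrix-vector product along a column equivalence. -/
theorem mulVec_split {p q₁ q₂ r : ℕ} (ε : Fin q₁ ⊕ Fin q₂ ≃ Fin r)
    (M : Matrix (Fin p) (Fin r) S) (x : Fin r → S) :
    M.mulVec x = (Matrix.of fun i l => M i (ε (Sum.inl l))).mulVec (fun l => x (ε (Sum.inl l)))
      + (Matrix.of fun i l => M i (ε (Sum.inr l))).mulVec (fun l => x (ε (Sum.inr l))) := by
  funext i
  simp only [Pi.add_apply, Matrix.mulVec, dotProduct, Matrix.of_apply]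
  rw [← Equiv.sum_comp ε (fun l => M i l * x l), Fintype.sum_sum_type]

theorem mulVec_mem_span {p q : ℕ} (M : Matrix (Fin p) (Fin q) S) (x : Fin q → S) :
    M.mulVec x ∈ Submodule.span S (Set.range fun j : Fin q => fun i => M i j) := by
  have h : M.mulVec x = ∑ j : Fin q, x j • (fun i => M i j) := by
    funext i
    simp [Matrix.mulVec, dotProduct, Finset.sum_apply, mul_comm]
  rw [h]
  exact Submodule.sum_mem _ fun j _ =>
    Submodule.smul_mem _ _ (Submodule.subset_span ⟨j, rfl⟩)

section Defs

variable (hm : m ≤ n) (hsum : n ≤ m + m')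
variable (M : Matrix (Fin (n + 1)) (Fin (m + 1)) S)
  (M' : Matrix (Fin (n + 1)) (Fin (m' + 1)) S)

/-- First `n-m` columns of `M'`. -/
def genC : Matrix (Fin (n + 1)) (Fin (n - m)) S := fun i l => M' i (genR hm hsum (Sum.inl l))

/-- Last `m+m'-n+1` columns of `M'`. -/
def genE : Matrix (Fin (n + 1)) (Fin (m + m' - n + 1)) S :=
  fun i j => M' i (genR hm hsum (Sum.inr j))

/-- The square matrix `[M | genC M']`. -/
def genG : Matrix (Fin (n + 1)) (Fin (n + 1)) S :=
  fun i l => Sum.elim (fun l₁ => M i l₁) (fun l₂ => genC hm hsum M' i l₂) ((genL hm).symm l)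

def genD : S := (genG hm hsum M M').det

def genN : Matrix (Fin (n + 1)) (Fin (m + m' - n + 1)) S :=
  adjugate (genG hm hsum M M') * genE hm hsum M'

def genNtop : Matrix (Fin (m + 1)) (Fin (m + m' - n + 1)) S :=
  fun l j => genN hm hsum M M' (genL hm (Sum.inl l)) j

def genNbot : Matrix (Fin (n - m)) (Fin (m + m' - n + 1)) S :=
  fun l j => genN hm hsum M M' (genL hm (Sum.inr l)) j

def genNum : Matrix (Fin (n + 1)) (Fin (m + m' - n + 1)) S := M * genNtop hm hsum M M'

theorem genG_inl (i : Fin (n + 1)) (l₁ : Fin (m + 1)) :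
    genG hm hsum M M' i (genL hm (Sum.inl l₁)) = M i l₁ := by
  simp [genG]

theorem genG_inr (i : Fin (n + 1)) (l₂ : Fin (n - m)) :
    genG hm hsum M M' i (genL hm (Sum.inr l₂)) = genC hm hsum M' i l₂ := by
  simp [genG]

end Defs

section Maps

variable (hm : m ≤ n) (hsum : n ≤ m + m') (f : S →+* S')
variable (M : Matrix (Fin (n + 1)) (Fin (m + 1)) S)
  (M' : Matrix (Fin (n + 1)) (Fin (m' + 1)) S)

theorem genC_map : (genC hm hsum M').map f = genC hm hsum (M'.map f) := rfl

theorem genE_map : (genE hm hsum M').map f = genE hm hsum (M'.map f) := rfl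

theorem genG_map : (genG hm hsum M M').map f = genG hm hsum (M.map f) (M'.map f) := by
  ext i l
  simp only [Matrix.map_apply, genG, genC]
  cases h : (genL hm).symm l <;> simp [h]

theorem genD_map : f (genD hm hsum M M') = genD hm hsum (M.map f) (M'.map f) := by
  rw [genD, genD, ← genG_map]
  exact f.map_det _

theorem genN_map : (genN hm hsum M M').map f = genN hm hsum (M.map f) (M'.map f) := by
  have h := f.map_adjugate (genG hm hsum M M')
  rw [RingHom.mapMatrix_apply, RingHom.mapMatrix_apply] at h
  rw [genN, genN, ← genG_map, ← genE_map, Matrix.map_mul, h]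

theorem genNtop_map :
    (genNtop hm hsum M M').map f = genNtop hm hsum (M.map f) (M'.map f) := by
  ext l j
  have := congrFun (congrFun (genN_map hm hsum f M M') (genL hm (Sum.inl l))) j
  simpa [Matrix.map_apply, genNtop] using this

theorem genNbot_map :
    (genNbot hm hsum M M').map f = genNbot hm hsum (M.map f) (M'.map f) := by
  ext l j
  have := congrFun (congrFun (genN_map hm hsum f M M') (genL hm (Sum.inr l))) j
  simpa [Matrix.map_apply, genNbot] using this

theorem genNum_map :
    (genNum hm hsum M M').map f = genNum hm hsum (M.map f) (M'.map f) := by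
  rw [genNum, genNum, Matrix.map_mul, genNtop_map]

end Maps

section Key

variable (hm : m ≤ n) (hsum : n ≤ m + m')
variable (M : Matrix (Fin (n + 1)) (Fin (m + 1)) S)
  (M' : Matrix (Fin (n + 1)) (Fin (m' + 1)) S)

theorem genKey :
    M * genNtop hm hsum M M' + genC hm hsum M' * genNbot hm hsum M M'
      = genD hm hsum M M' • genE hm hsum M' := by
  have hsplit : genG hm hsum M M' * genN hm hsum M M'
      = M * genNtop hm hsum M M' + genC hm hsum M' * genNbot hm hsum M M' := by
    ext i j
    simp only [Matrix.add_apply, Matrix.mul_apply]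
    rw [← Equiv.sum_comp (genL hm)
      (fun l => genG hm hsum M M' i l * genN hm hsum M M' l j), Fintype.sum_sum_type]
    congr 1 <;> refine Finset.sum_congr rfl fun l _ => ?_
    · rw [genG_inl]; rfl
    · rw [genG_inr]; rfl
  rw [← hsplit, genN, ← Matrix.mul_assoc, mul_adjugate, Matrix.smul_mul, Matrix.one_mul, genD]

end Key

section Symbolic

/-- Index type for the entries of the two generic matrices. -/
abbrev GenIdx (n m m' : ℕ) : Type :=
  (Fin (n + 1) × Fin (m + 1)) ⊕ (Fin (n + 1) × Fin (m' + 1))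

variable (k : Type*) [Field k] (n m m' : ℕ)

/-- The generic `(n+1) × (m+1)` matrix of variables. -/
def genXa : Matrix (Fin (n + 1)) (Fin (m + 1)) (MvPolynomial (GenIdx n m m') k) :=
  fun i j => X (Sum.inl (i, j))

/-- The generic `(n+1) × (m'+1)` matrix of variables. -/
def genXa' : Matrix (Fin (n + 1)) (Fin (m' + 1)) (MvPolynomial (GenIdx n m m') k) :=
  fun i j => X (Sum.inr (i, j))

variable {n m m'} (hm : m ≤ n) (hm' : m' ≤ n) (hsum : n ≤ m + m')

theorem genL_inl_coe (l₁ : Fin (m + 1)) : ((genL hm (Sum.inl l₁) : Fin (n+1)) : ℕ) = l₁ := by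
  simp [genL]

theorem genL_inr_coe (l₂ : Fin (n - m)) :
    ((genL hm (Sum.inr l₂) : Fin (n+1)) : ℕ) = m + 1 + l₂ := by
  simp [genL]

theorem genD_ne_zero : genD hm hsum (genXa k n m m') (genXa' k n m m') ≠ 0 := by
  intro h0
  set s₀ : GenIdx n m m' → k := Sum.elim
    (fun p => if (p.1 : ℕ) = (p.2 : ℕ) then 1 else 0)
    (fun p => Sum.elim (fun l₂ : Fin (n - m) => if (p.1 : ℕ) = m + 1 + (l₂ : ℕ) then 1 else 0)
      (fun _ => (0 : k)) ((genR hm hsum).symm p.2)) with hs₀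
  have h2 := genD_map hm hsum
    ((aeval s₀ : MvPolynomial (GenIdx n m m') k →ₐ[k] k) :
      MvPolynomial (GenIdx n m m') k →+* k) (genXa k n m m') (genXa' k n m m')
  simp only [AlgHom.coe_toRingHom] at h2
  have hG1 : genG hm hsum ((genXa k n m m').map (aeval s₀))
      ((genXa' k n m m').map (aeval s₀)) = 1 := by
    ext i l
    obtain ⟨u, rfl⟩ : ∃ u, l = genL hm u :=
      ⟨(genL hm).symm l, ((genL hm).apply_symm_apply l).symm⟩
    cases u with
    | inl l₁ =>
      rw [genG_inl]
      have hiff : (i = genL hm (Sum.inl l₁)) ↔ ((i : ℕ) = (l₁ : ℕ)) := by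
        rw [Fin.ext_iff, genL_inl_coe]
      simp [Matrix.map_apply, genXa, hs₀, Matrix.one_apply, hiff]
    | inr l₂ =>
      rw [genG_inr]
      have hiff : (i = genL hm (Sum.inr l₂)) ↔ ((i : ℕ) = m + 1 + (l₂ : ℕ)) := by
        rw [Fin.ext_iff, genL_inr_coe]
      simp [genC, Matrix.map_apply, genXa', hs₀, Matrix.one_apply, hiff]
  rw [h0, map_zero] at h2
  rw [genD, hG1, Matrix.det_one] at h2
  exact one_ne_zero h2.symm

/-- The section/specialization used to show genericity of the constructed matrix. -/
def genSec : GenIdx n m m' → MvPolynomial (GenIdx n m m') k :=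
  Sum.elim (fun p => X (Sum.inl p))
    (fun p => Sum.elim (fun _ : Fin (n - m) => X (Sum.inr p))
      (fun j₂ : Fin (m + m' - n + 1) => X (Sum.inl (p.1, Fin.castLE (by omega) j₂)))
      ((genR hm hsum).symm p.2))

theorem genSec_Gfix :
    genG hm hsum (genXa k n m m') ((genXa' k n m m').map (aeval (genSec k hm hm' hsum)))
      = genG hm hsum (genXa k n m m') (genXa' k n m m') := by
  ext i l
  obtain ⟨u, rfl⟩ : ∃ u, l = genL hm u :=
    ⟨(genL hm).symm l, ((genL hm).apply_symm_apply l).symm⟩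
  cases u with
  | inl l₁ => rw [genG_inl, genG_inl]
  | inr l₂ =>
    rw [genG_inr, genG_inr]
    simp [genC, Matrix.map_apply, genXa', genSec]

theorem genSec_Xa :
    (genXa k n m m').map (aeval (genSec k hm hm' hsum)) = genXa k n m m' := by
  ext i j
  simp [Matrix.map_apply, genXa, genSec]

theorem genSec_E (hc : m + m' - n + 1 ≤ m + 1) :
    genE hm hsum ((genXa' k n m m').map (aeval (genSec k hm hm' hsum)))
      = Matrix.of fun i j => genXa k n m m' i (Fin.castLE hc j) := by
  ext i j
  simp [genE, Matrix.map_apply, genXa', genXa, genSec]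

theorem genSec_D :
    aeval (genSec k hm hm' hsum) (genD hm hsum (genXa k n m m') (genXa' k n m m'))
      = genD hm hsum (genXa k n m m') (genXa' k n m m') := by
  have h2 := genD_map hm hsum
    ((aeval (genSec k hm hm' hsum) : MvPolynomial (GenIdx n m m') k →ₐ[k] _) :
      MvPolynomial (GenIdx n m m') k →+* MvPolynomial (GenIdx n m m') k)
    (genXa k n m m') (genXa' k n m m')
  simp only [AlgHom.coe_toRingHom] at h2
  rw [h2, genD, genD, genSec_Xa, genSec_Gfix]

theorem genSec_num (hc : m + m' - n + 1 ≤ m + 1) (i : Fin (n + 1)) (j : Fin (m + m' - n + 1)) :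
    aeval (genSec k hm hm' hsum) (genNum hm hsum (genXa k n m m') (genXa' k n m m') i j)
      = genD hm hsum (genXa k n m m') (genXa' k n m m')
          * X (Sum.inl (i, Fin.castLE hc j)) := by
  have h1 : (aeval (genSec k hm hm' hsum)) (genNum hm hsum (genXa k n m m') (genXa' k n m m') i j)
      = genNum hm hsum ((genXa k n m m').map (aeval (genSec k hm hm' hsum)))
          ((genXa' k n m m').map (aeval (genSec k hm hm' hsum))) i j := by
    have h0 := genNum_map hm hsum
      ((aeval (genSec k hm hm' hsum) : MvPolynomial (GenIdx n m m') k →ₐ[k] _) :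
        MvPolynomial (GenIdx n m m') k →+* MvPolynomial (GenIdx n m m') k)
      (genXa k n m m') (genXa' k n m m')
    simp only [AlgHom.coe_toRingHom] at h0
    have h0' := congrFun (congrFun h0 i) j
    simpa [Matrix.map_apply] using h0'
  rw [h1, genSec_Xa]
  set A := genXa k n m m' with hA
  set A' := genXa' k n m m' with hA'
  set f := (aeval (genSec k hm hm' hsum) : MvPolynomial (GenIdx n m m') k →ₐ[k] _) with hf
  have hN : genN hm hsum A (A'.map f) = Matrix.of fun l j =>
      genD hm hsum A A' *
        (1 : Matrix (Fin (n+1)) (Fin (n+1)) (MvPolynomial (GenIdx n m m') k)) l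
          (genL hm (Sum.inl (Fin.castLE hc j))) := by
    rw [genN, genSec_Gfix, genSec_E k hm hm' hsum hc]
    refine Matrix.ext fun l j => ?_
    rw [Matrix.of_apply, Matrix.mul_apply]
    have hcol : ∀ u, (Matrix.of fun i j => A i (Fin.castLE hc j)) u j
        = genG hm hsum A A' u (genL hm (Sum.inl (Fin.castLE hc j))) := fun u =>
      (genG_inl hm hsum A A' u (Fin.castLE hc j)).symm
    calc ∑ u, adjugate (genG hm hsum A A') l u * (Matrix.of fun i j => A i (Fin.castLE hc j)) u j
        = ∑ u, adjugate (genG hm hsum A A') l u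
            * genG hm hsum A A' u (genL hm (Sum.inl (Fin.castLE hc j))) := by simp_rw [hcol]
      _ = (adjugate (genG hm hsum A A') * genG hm hsum A A') l
            (genL hm (Sum.inl (Fin.castLE hc j))) := (Matrix.mul_apply).symm
      _ = _ := by rw [Matrix.adjugate_mul]; simp [Matrix.smul_apply, genD, smul_eq_mul]
  have hNtop : ∀ (l : Fin (m+1)) (j' : Fin (m + m' - n + 1)), genNtop hm hsum A (A'.map f) l j'
      = if l = Fin.castLE hc j' then genD hm hsum A A' else 0 := by
    intro l j'
    show genN hm hsum A (A'.map f) (genL hm (Sum.inl l)) j' = _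
    rw [hN, Matrix.of_apply, Matrix.one_apply]
    simp [Equiv.apply_eq_iff_eq, mul_ite]
  rw [genNum, Matrix.mul_apply]
  simp only [hNtop, mul_ite, mul_zero]
  rw [Finset.sum_ite_eq' Finset.univ (Fin.castLE hc j) (fun l => A i l * genD hm hsum A A')]
  simp [mul_comm, genXa, hA]

include hm' in
theorem genSq_det_ne_zero (hc : m + m' - n + 1 ≤ m + 1) (hc' : m + m' - n + 1 ≤ n + 1) :
    Matrix.det (Matrix.of fun i j : Fin (m + m' - n + 1) =>
      genNum hm hsum (genXa k n m m') (genXa' k n m m') (Fin.castLE hc' i) j) ≠ 0 := by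
  intro h
  have h3 := (aeval (genSec k hm hm' hsum) :
      MvPolynomial (GenIdx n m m') k →ₐ[k] MvPolynomial (GenIdx n m m') k).map_det
    (Matrix.of fun i j : Fin (m + m' - n + 1) =>
      genNum hm hsum (genXa k n m m') (genXa' k n m m') (Fin.castLE hc' i) j)
  rw [h, map_zero] at h3
  have hmap : (aeval (genSec k hm hm' hsum)).mapMatrix
      (Matrix.of fun i j : Fin (m + m' - n + 1) =>
        genNum hm hsum (genXa k n m m') (genXa' k n m m') (Fin.castLE hc' i) j)
      = genD hm hsum (genXa k n m m') (genXa' k n m m') •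
        Matrix.of (fun i j : Fin (m + m' - n + 1) =>
          (X (Sum.inl (Fin.castLE hc' i, Fin.castLE hc j)) :
            MvPolynomial (GenIdx n m m') k)) := by
    refine Matrix.ext fun i j => ?_
    simp only [AlgHom.mapMatrix_apply, Matrix.map_apply, Matrix.of_apply, Matrix.smul_apply,
      smul_eq_mul]
    exact genSec_num k hm hm' hsum hc (Fin.castLE hc' i) j
  rw [hmap, Matrix.det_smul] at h3
  rcases mul_eq_zero.mp h3.symm with h4 | h4
  · exact pow_ne_zero _ (genD_ne_zero k hm hsum) h4
  · set s₁ : GenIdx n m m' → k := Sum.elim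
      (fun p => if (p.1 : ℕ) = (p.2 : ℕ) then 1 else 0) (fun _ => 0) with hs₁
    have h5 := (aeval s₁ : MvPolynomial (GenIdx n m m') k →ₐ[k] k).map_det
      (Matrix.of (fun i j : Fin (m + m' - n + 1) =>
        (X (Sum.inl (Fin.castLE hc' i, Fin.castLE hc j)) : MvPolynomial (GenIdx n m m') k)))
    rw [h4, map_zero] at h5
    have hone : (aeval s₁).mapMatrix (Matrix.of (fun i j : Fin (m + m' - n + 1) =>
        (X (Sum.inl (Fin.castLE hc' i, Fin.castLE hc j)) : MvPolynomial (GenIdx n m m') k)))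
        = 1 := by
      refine Matrix.ext fun i j => ?_
      simp [Matrix.map_apply, hs₁, Matrix.one_apply, Fin.ext_iff]
    rw [hone, Matrix.det_one] at h5
    exact one_ne_zero h5.symm

end Symbolic

end GenericIntersectionAux
/-- Linear-algebraic content of Lemma 3.8: if the entries of the `(n+1)×(m+1)` matrix `a`
and of the `(n+1)×(m'+1)` matrix `a'` are jointly algebraically independent over `k`,
with `m, m' ≤ n ≤ m + m'`, then the intersection of their column spaces has dimension
`m + m' + 1 − n`, and it is the column space of an `(n+1)×(m+m'−n+1)` matrix `b` whose
entries are algebraically independent over `k`. -/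
theorem generic_intersection (k K : Type*) [Field k] [Field K] [Algebra k K]
    (n m m' : ℕ) (hm : m ≤ n) (hm' : m' ≤ n) (hsum : n ≤ m + m')
    (a : Matrix (Fin (n + 1)) (Fin (m + 1)) K)
    (a' : Matrix (Fin (n + 1)) (Fin (m' + 1)) K)
    (halg : AlgebraicIndependent k
      (Sum.elim (fun p : Fin (n + 1) × Fin (m + 1) => a p.1 p.2)
        (fun p : Fin (n + 1) × Fin (m' + 1) => a' p.1 p.2))) :
    Module.finrank K
      ↥(Submodule.span K (Set.range fun j : Fin (m + 1) => fun i => a i j) ⊓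
        Submodule.span K (Set.range fun j : Fin (m' + 1) => fun i => a' i j)) =
      m + m' + 1 - n ∧
    ∃ b : Matrix (Fin (n + 1)) (Fin (m + m' - n + 1)) K,
      AlgebraicIndependent k
        (fun p : Fin (n + 1) × Fin (m + m' - n + 1) => b p.1 p.2) ∧
      Submodule.span K (Set.range fun j : Fin (m + m' - n + 1) => fun i => b i j) =
        Submodule.span K (Set.range fun j : Fin (m + 1) => fun i => a i j) ⊓
          Submodule.span K (Set.range fun j : Fin (m' + 1) => fun i => a' i j) := by
  classical
  have hc : m + m' - n + 1 ≤ m + 1 := by omega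
  have hc' : m + m' - n + 1 ≤ n + 1 := by omega
  set φ : MvPolynomial (GenIdx n m m') k →ₐ[k] K := aeval
    (Sum.elim (fun p : Fin (n + 1) × Fin (m + 1) => a p.1 p.2)
      (fun p : Fin (n + 1) × Fin (m' + 1) => a' p.1 p.2)) with hφ
  have hφinj : Function.Injective φ := algebraicIndependent_iff_injective_aeval.mp halg
  have hXa : (genXa k n m m').map φ = a := by
    refine Matrix.ext fun i j => ?_
    simp [genXa, Matrix.map_apply, hφ]
  have hXa' : (genXa' k n m m').map φ = a' := by
    refine Matrix.ext fun i j => ?_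
    simp [genXa', Matrix.map_apply, hφ]
  set D := genD hm hsum (genXa k n m m') (genXa' k n m m') with hD
  have hDne : D ≠ 0 := genD_ne_zero k hm hsum
  have hdet : φ D = genD hm hsum a a' := by
    have h0 := genD_map hm hsum (φ : MvPolynomial (GenIdx n m m') k →+* K)
      (genXa k n m m') (genXa' k n m m')
    simp only [AlgHom.coe_toRingHom] at h0
    rw [hD, h0, hXa, hXa']
  have hnum : ∀ i j, φ (genNum hm hsum (genXa k n m m') (genXa' k n m m') i j)
      = genNum hm hsum a a' i j := by
    intro i j
    have h0 := genNum_map hm hsum (φ : MvPolynomial (GenIdx n m m') k →+* K)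
      (genXa k n m m') (genXa' k n m m')
    simp only [AlgHom.coe_toRingHom] at h0
    rw [hXa, hXa'] at h0
    exact congrFun (congrFun h0 i) j
  have hφD : φ D ≠ 0 := fun h => hDne (hφinj (by simpa using h))
  set Dk : K := genD hm hsum a a' with hDk
  have hDkne : Dk ≠ 0 := hdet ▸ hφD
  set b : Matrix (Fin (n + 1)) (Fin (m + m' - n + 1)) K :=
    Matrix.of fun i j => Dk⁻¹ * genNum hm hsum a a' i j with hb
  -- span equality
  have hbspan : Submodule.span K (Set.range fun j : Fin (m + m' - n + 1) => fun i => b i j) =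
      Submodule.span K (Set.range fun j : Fin (m + 1) => fun i => a i j) ⊓
        Submodule.span K (Set.range fun j : Fin (m' + 1) => fun i => a' i j) := by
    refine le_antisymm ?_ ?_
    · rw [Submodule.span_le]
      rintro _ ⟨j, rfl⟩
      refine Submodule.mem_inf.mpr ⟨?_, ?_⟩
      · have hcol : (fun i => b i j) = a.mulVec
            (fun l => Dk⁻¹ * genNtop hm hsum a a' l j) := by
          funext i
          simp only [hb, Matrix.of_apply, Matrix.mulVec, dotProduct, genNum, Matrix.mul_apply,
            Finset.mul_sum]
          exact Finset.sum_congr rfl fun l _ => by ring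
        show (fun i => b i j) ∈ Submodule.span K (Set.range fun j : Fin (m + 1) => fun i => a i j)
        rw [hcol]
        exact mulVec_mem_span a _
      · have hcol : (fun i => b i j) = a'.mulVec (fun l' =>
            Sum.elim (fun l₂ : Fin (n - m) => -(Dk⁻¹ * genNbot hm hsum a a' l₂ j))
              (fun j₂ : Fin (m + m' - n + 1) => if j₂ = j then 1 else 0)
              ((genR hm hsum).symm l')) := by
          funext i
          have hkeyij := congrFun (congrFun (genKey hm hsum a a') i) j
          simp only [Matrix.add_apply, Matrix.smul_apply, smul_eq_mul] at hkeyij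
          show b i j = _
          simp only [Matrix.mulVec, dotProduct]
          rw [← Equiv.sum_comp (genR hm hsum)
            (fun l' => a' i l' * Sum.elim (fun l₂ : Fin (n - m) =>
              -(Dk⁻¹ * genNbot hm hsum a a' l₂ j))
              (fun j₂ : Fin (m + m' - n + 1) => if j₂ = j then 1 else 0)
              ((genR hm hsum).symm l')), Fintype.sum_sum_type]
          simp only [Equiv.symm_apply_apply, Sum.elim_inl, Sum.elim_inr, mul_ite, mul_one,
            mul_zero]
          rw [Finset.sum_ite_eq' Finset.univ j (fun j₂ => a' i (genR hm hsum (Sum.inr j₂)))]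
          simp only [Finset.mem_univ, if_true]
          have hsum₂ : ∑ l₂ : Fin (n - m),
              a' i (genR hm hsum (Sum.inl l₂)) * -(Dk⁻¹ * genNbot hm hsum a a' l₂ j)
              = -(Dk⁻¹ * (genC hm hsum a' * genNbot hm hsum a a') i j) := by
            rw [Matrix.mul_apply, Finset.mul_sum, ← Finset.sum_neg_distrib]
            refine Finset.sum_congr rfl fun l₂ _ => ?_
            have hgC : genC hm hsum a' i l₂ = a' i (genR hm hsum (Sum.inl l₂)) := rfl
            rw [hgC]
            ring
          rw [hsum₂]
          have hbij : b i j = Dk⁻¹ * (a * genNtop hm hsum a a') i j := rfl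
          have hEij : a' i (genR hm hsum (Sum.inr j)) = genE hm hsum a' i j := rfl
          rw [hbij, hEij]
          field_simp
          linear_combination hkeyij
        show (fun i => b i j) ∈ Submodule.span K
          (Set.range fun j : Fin (m' + 1) => fun i => a' i j)
        rw [hcol]
        exact mulVec_mem_span a' _
    · rintro v hv
      obtain ⟨x, hx⟩ := (Submodule.mem_span_range_iff_exists_fun K).mp hv.1
      obtain ⟨y, hy⟩ := (Submodule.mem_span_range_iff_exists_fun K).mp hv.2
      have hxa : a.mulVec x = v := by
        rw [← hx]; funext i
        simp [Matrix.mulVec, dotProduct, Finset.sum_apply, mul_comm]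
      have hya : a'.mulVec y = v := by
        rw [← hy]; funext i
        simp [Matrix.mulVec, dotProduct, Finset.sum_apply, mul_comm]
      set t : Fin (m + m' - n + 1) → K := fun j => y (genR hm hsum (Sum.inr j)) with ht
      set u : Fin (n + 1) → K := fun l =>
        Sum.elim x (fun l₂ => -(y (genR hm hsum (Sum.inl l₂)))) ((genL hm).symm l) with hu
      have hGu : (genG hm hsum a a').mulVec u = (genE hm hsum a').mulVec t := by
        rw [mulVec_split (genL hm) (genG hm hsum a a') u]
        have h1 : (Matrix.of fun i l => genG hm hsum a a' i (genL hm (Sum.inl l))) = a := by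
          refine Matrix.ext fun i l => ?_; rw [Matrix.of_apply, genG_inl]
        have h1' : (fun l => u (genL hm (Sum.inl l))) = x := by
          funext l; simp [hu]
        have h2 : (Matrix.of fun i l => genG hm hsum a a' i (genL hm (Sum.inr l)))
            = genC hm hsum a' := by
          refine Matrix.ext fun i l => ?_; rw [Matrix.of_apply, genG_inr]
        have h2' : (fun l => u (genL hm (Sum.inr l)))
            = -(fun l₂ => y (genR hm hsum (Sum.inl l₂))) := by
          funext l; simp [hu]
        rw [h1, h1', h2, h2', hxa, Matrix.mulVec_neg]
        have h3 := mulVec_split (genR hm hsum) a' y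
        have h4 : (Matrix.of fun i l => a' i (genR hm hsum (Sum.inl l))) = genC hm hsum a' := rfl
        have h5 : (Matrix.of fun i l => a' i (genR hm hsum (Sum.inr l))) = genE hm hsum a' := rfl
        rw [h4, h5, hya, ← ht] at h3
        rw [h3]
        abel
      have hu2 : Dk • u = (genN hm hsum a a').mulVec t := by
        have h6 := congrArg (fun w => (adjugate (genG hm hsum a a')).mulVec w) hGu
        simp only [Matrix.mulVec_mulVec] at h6
        rw [Matrix.adjugate_mul] at h6
        rw [Matrix.smul_mulVec, Matrix.one_mulVec] at h6
        exact h6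
      have hx2 : ∀ l, Dk * x l = (genNtop hm hsum a a').mulVec t l := by
        intro l
        have h7 := congrFun hu2 (genL hm (Sum.inl l))
        simp only [Pi.smul_apply, smul_eq_mul, hu, Equiv.symm_apply_apply, Sum.elim_inl] at h7
        exact h7
      have hvb : v = b.mulVec t := by
        rw [← hxa]
        funext i
        simp only [Matrix.mulVec, dotProduct, hb, Matrix.of_apply]
        have hxl : ∀ l, x l = Dk⁻¹ * ((genNtop hm hsum a a').mulVec t l) := by
          intro l; rw [← hx2 l, ← mul_assoc, inv_mul_cancel₀ hDkne, one_mul]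
        calc ∑ l, a i l * x l
            = Dk⁻¹ * ∑ l, a i l * ((genNtop hm hsum a a').mulVec t l) := by
              rw [Finset.mul_sum]
              exact Finset.sum_congr rfl fun l _ => by rw [hxl l]; ring
          _ = Dk⁻¹ * ∑ j', (a * genNtop hm hsum a a') i j' * t j' := by
              congr 1
              simp only [Matrix.mulVec, dotProduct, Matrix.mul_apply, Finset.mul_sum,
                Finset.sum_mul]
              rw [Finset.sum_comm]
              exact Finset.sum_congr rfl fun j' _ => Finset.sum_congr rfl fun l _ => by ring
          _ = ∑ j', Dk⁻¹ * genNum hm hsum a a' i j' * t j' := by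
              rw [Finset.mul_sum]
              exact Finset.sum_congr rfl fun j' _ => by rw [genNum]; ring
      rw [hvb]
      exact mulVec_mem_span b t

  -- linear independence of the columns of b
  have hbli : LinearIndependent K (fun j : Fin (m + m' - n + 1) => fun i => b i j) := by
    have hsqRne := genSq_det_ne_zero k hm hm' hsum hc hc'
    have hsqK : (Matrix.of fun i j : Fin (m + m' - n + 1) =>
        genNum hm hsum a a' (Fin.castLE hc' i) j).det ≠ 0 := by
      intro h
      apply hsqRne
      apply hφinj
      rw [map_zero]
      have h8 := φ.map_det (Matrix.of fun i j : Fin (m + m' - n + 1) =>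
        genNum hm hsum (genXa k n m m') (genXa' k n m m') (Fin.castLE hc' i) j)
      have h9 : φ.mapMatrix (Matrix.of fun i j : Fin (m + m' - n + 1) =>
          genNum hm hsum (genXa k n m m') (genXa' k n m m') (Fin.castLE hc' i) j)
          = Matrix.of fun i j : Fin (m + m' - n + 1) =>
              genNum hm hsum a a' (Fin.castLE hc' i) j :=
        Matrix.ext fun i j => hnum _ _
      rw [h8, h9, h]
    have hbdet : (Matrix.of fun i j : Fin (m + m' - n + 1) => b (Fin.castLE hc' i) j).det ≠ 0 := by
      have heq : (Matrix.of fun i j : Fin (m + m' - n + 1) => b (Fin.castLE hc' i) j)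
          = Dk⁻¹ • Matrix.of fun i j : Fin (m + m' - n + 1) =>
              genNum hm hsum a a' (Fin.castLE hc' i) j := by
        refine Matrix.ext fun i j => ?_
        simp [hb, Matrix.smul_apply, smul_eq_mul]
      rw [heq, Matrix.det_smul]
      exact mul_ne_zero (pow_ne_zero _ (inv_ne_zero hDkne)) hsqK
    rw [Fintype.linearIndependent_iff]
    intro g hg j
    have hmv : (Matrix.of fun i j : Fin (m + m' - n + 1) =>
        b (Fin.castLE hc' i) j).mulVec g = 0 := by
      funext i
      have h10 := congrFun hg (Fin.castLE hc' i)
      simpa [Matrix.mulVec, dotProduct, Finset.sum_apply, mul_comm] using h10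
    exact congrFun (Matrix.eq_zero_of_mulVec_eq_zero hbdet hmv) j
  -- algebraic independence of the entries of b
  have hbalg : AlgebraicIndependent k
      (fun p : Fin (n + 1) × Fin (m + m' - n + 1) => b p.1 p.2) := by
    letI : Algebra k (Localization.Away D) :=
      ((algebraMap (MvPolynomial (GenIdx n m m') k) (Localization.Away D)).comp
        (algebraMap k (MvPolynomial (GenIdx n m m') k))).toAlgebra
    have hφDu : IsUnit ((φ : MvPolynomial (GenIdx n m m') k →+* K) D) :=
      isUnit_iff_ne_zero.mpr hφD
    set ρ : Localization.Away D →+* K := IsLocalization.Away.lift D hφDu with hρ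
    have hρeq : ∀ r, ρ (algebraMap _ (Localization.Away D) r) = φ r := fun r =>
      IsLocalization.Away.lift_eq D hφDu r
    have hρinv : ρ (IsLocalization.Away.invSelf D) = (φ D)⁻¹ := by
      have h1 := congrArg ρ (IsLocalization.Away.mul_invSelf (S := Localization.Away D) D)
      rw [_root_.map_mul, _root_.map_one, hρeq] at h1
      exact eq_inv_of_mul_eq_one_left (by rw [mul_comm]; exact h1)
    set ρa : Localization.Away D →ₐ[k] K :=
      { toRingHom := ρ, commutes' := fun c => by
          show ρ (algebraMap (MvPolynomial (GenIdx n m m') k) (Localization.Away D)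
            (algebraMap k _ c)) = _
          rw [hρeq]
          exact φ.commutes c } with hρa
    set βt : Fin (n + 1) × Fin (m + m' - n + 1) → Localization.Away D := fun p =>
      algebraMap _ _ (genNum hm hsum (genXa k n m m') (genXa' k n m m') p.1 p.2)
        * IsLocalization.Away.invSelf D with hβt
    have hbρ : ∀ p : Fin (n + 1) × Fin (m + m' - n + 1), b p.1 p.2 = ρa (βt p) := by
      intro p
      show b p.1 p.2 = ρ (βt p)
      rw [hβt, _root_.map_mul, hρeq, hρinv, hnum, hdet]
      show Dk⁻¹ * genNum hm hsum a a' p.1 p.2 = _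
      ring
    rw [algebraicIndependent_iff]
    intro P hP
    have h1 : ρa (aeval βt P) = 0 := by
      rw [MvPolynomial.comp_aeval_apply]
      have heqf : (fun p => ρa (βt p))
          = fun p : Fin (n + 1) × Fin (m + m' - n + 1) => b p.1 p.2 :=
        funext fun p => (hbρ p).symm
      rw [heqf, hP]
    have hρinj : Function.Injective ρ := by
      rw [injective_iff_map_eq_zero]
      intro z hz
      obtain ⟨nn, r, hr⟩ := IsLocalization.Away.surj (S := Localization.Away D) D z
      have h2 : φ r = 0 := by
        rw [← hρeq r, ← hr, _root_.map_mul, hz, zero_mul]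
      have h3 : r = 0 := hφinj (by simpa using h2)
      rw [h3, _root_.map_zero] at hr
      have h4 : IsUnit ((algebraMap (MvPolynomial (GenIdx n m m') k)
          (Localization.Away D)) D ^ nn) :=
        (IsLocalization.Away.algebraMap_isUnit (S := Localization.Away D) D).pow nn
      exact (h4.mul_left_eq_zero).mp hr
    have h2 : aeval βt P = 0 := by
      apply hρinj
      rw [_root_.map_zero]
      exact h1
    letI : Algebra k (FractionRing (MvPolynomial (GenIdx n m m') k)) :=
      ((algebraMap (MvPolynomial (GenIdx n m m') k)
          (FractionRing (MvPolynomial (GenIdx n m m') k))).comp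
        (algebraMap k (MvPolynomial (GenIdx n m m') k))).toAlgebra
    have hFinj : Function.Injective (algebraMap (MvPolynomial (GenIdx n m m') k)
        (FractionRing (MvPolynomial (GenIdx n m m') k))) :=
      IsFractionRing.injective _ _
    set g : MvPolynomial (GenIdx n m m') k →+*
        FractionRing (MvPolynomial (GenIdx n m m') k) :=
      (algebraMap _ (FractionRing (MvPolynomial (GenIdx n m m') k))).comp
        ((aeval (genSec k hm hm' hsum) :
          MvPolynomial (GenIdx n m m') k →ₐ[k] MvPolynomial (GenIdx n m m') k) :
            MvPolynomial (GenIdx n m m') k →+* MvPolynomial (GenIdx n m m') k) with hg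
    have hgDeq : g D = algebraMap (MvPolynomial (GenIdx n m m') k)
        (FractionRing (MvPolynomial (GenIdx n m m') k)) D := by
      rw [hg]
      simp only [RingHom.coe_comp, Function.comp_apply, AlgHom.coe_toRingHom]
      rw [hD, genSec_D]
    have hgDne : g D ≠ 0 := by
      rw [hgDeq]
      exact (map_ne_zero_iff _ hFinj).mpr hDne
    have hgD : IsUnit (g D) := isUnit_iff_ne_zero.mpr hgDne
    set τ : Localization.Away D →+* FractionRing (MvPolynomial (GenIdx n m m') k) :=
      IsLocalization.Away.lift D hgD with hτ
    have hτeq : ∀ r, τ (algebraMap _ (Localization.Away D) r) = g r := fun r =>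
      IsLocalization.Away.lift_eq D hgD r
    have hτinv : τ (IsLocalization.Away.invSelf D) = (g D)⁻¹ := by
      have h0 := congrArg τ (IsLocalization.Away.mul_invSelf (S := Localization.Away D) D)
      rw [_root_.map_mul, _root_.map_one, hτeq] at h0
      exact eq_inv_of_mul_eq_one_left (by rw [mul_comm]; exact h0)
    set τa : Localization.Away D →ₐ[k] FractionRing (MvPolynomial (GenIdx n m m') k) :=
      { toRingHom := τ, commutes' := fun c => by
          show τ (algebraMap (MvPolynomial (GenIdx n m m') k) (Localization.Away D)
            (algebraMap k _ c)) = _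
          rw [hτeq, hg]
          simp only [RingHom.coe_comp, Function.comp_apply, AlgHom.coe_toRingHom]
          rw [AlgHom.commutes]
          rfl } with hτa
    have h3 : aeval (fun p => τa (βt p)) P = 0 := by
      rw [← MvPolynomial.comp_aeval_apply, h2, _root_.map_zero]
    have hτβ : ∀ p : Fin (n + 1) × Fin (m + m' - n + 1),
        τa (βt p) = algebraMap (MvPolynomial (GenIdx n m m') k)
          (FractionRing (MvPolynomial (GenIdx n m m') k))
          (X (Sum.inl (p.1, Fin.castLE hc p.2))) := by
      intro p
      show τ (βt p) = _
      rw [hβt, _root_.map_mul, hτeq, hτinv]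
      have h4 : g (genNum hm hsum (genXa k n m m') (genXa' k n m m') p.1 p.2)
          = g D * algebraMap (MvPolynomial (GenIdx n m m') k)
              (FractionRing (MvPolynomial (GenIdx n m m') k))
              (X (Sum.inl (p.1, Fin.castLE hc p.2))) := by
        rw [hg]
        simp only [RingHom.coe_comp, Function.comp_apply, AlgHom.coe_toRingHom]
        rw [genSec_num k hm hm' hsum hc, _root_.map_mul, hD, genSec_D]
      rw [h4, mul_comm (g D), mul_assoc, mul_inv_cancel₀ hgDne, mul_one]
    have hXind : AlgebraicIndependent k (fun p : Fin (n + 1) × Fin (m + m' - n + 1) =>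
        algebraMap (MvPolynomial (GenIdx n m m') k)
          (FractionRing (MvPolynomial (GenIdx n m m') k))
          (X (Sum.inl (p.1, Fin.castLE hc p.2)))) := by
      have h5 := MvPolynomial.algebraicIndependent_X (GenIdx n m m') k
      have h6 := h5.comp (fun p : Fin (n + 1) × Fin (m + m' - n + 1) =>
        (Sum.inl (p.1, Fin.castLE hc p.2) : GenIdx n m m')) (by
          intro p q h
          simp only [Sum.inl.injEq, Prod.mk.injEq] at h
          exact Prod.ext h.1 (Fin.castLE_injective hc h.2))
      exact h6.map' (f := (⟨algebraMap (MvPolynomial (GenIdx n m m') k)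
        (FractionRing (MvPolynomial (GenIdx n m m') k)), fun c => rfl⟩ :
          MvPolynomial (GenIdx n m m') k →ₐ[k]
            FractionRing (MvPolynomial (GenIdx n m m') k))) hFinj
    have h8 : aeval (fun p : Fin (n + 1) × Fin (m + m' - n + 1) =>
        algebraMap (MvPolynomial (GenIdx n m m') k)
          (FractionRing (MvPolynomial (GenIdx n m m') k))
          (X (Sum.inl (p.1, Fin.castLE hc p.2)))) P = 0 := by
      have heqf := funext hτβ
      rw [heqf] at h3
      exact h3
    exact algebraicIndependent_iff.mp hXind P h8

  refine ⟨?_, b, hbalg, hbspan⟩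
  rw [← hbspan, finrank_span_eq_card hbli, Fintype.card_fin]
  omega
end

section
/- Fix an integer n ≥ 1. For each odd prime p and each a ∈ 𝔽_p let e_p(a) = exp(2πi·ã/p), where ã ∈ {0,…,p−1} is the integer representative of a. For each triple (M, b, c) with M a symmetric invertible n×n matrix over 𝔽_p, b ∈ 𝔽_p^n and c ∈ 𝔽_p, set S(M,b,c;p) = p^{−n/2}·∑_{x ∈ 𝔽_p^n} e_p(xᵀMx + bᵀx + c) ∈ ℂ. Then each S(M,b,c;p) has modulus 1, and the families (S(M,b,c;p))_{(M,b,c)} become equidistributed in the unit circle with respect to the Haar probability measure as p → ∞: for every continuous function φ : ℂ → ℂ, the average of φ(S(M,b,c;p)) over all such triples (M, b, c) converges, as p tends to infinity through primes, to the integral of φ over the unit circle {z ∈ ℂ : |z| = 1} against its Haar (rotation-invariant) probability measure. -/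
/-!
Squaring out `G = ∑ₓ ψ(xᵀMx + bᵀx + c)` and substituting `x = y + h` gives
`|G|² = ∑ₕ ψ(hᵀMh + bᵀh) ∑_y ψ(((M + Mᵀ)h)ᵀy)`; the inner sum vanishes unless
`(M + Mᵀ)h = 2Mh = 0`, i.e. `h = 0`, so `|G|² = pⁿ` and `|S(M,b,c;p)| = 1`.

Moreover `S(M,b,c;p) = e_p(c) · S(M,b,0;p)`, so for fixed `(M, b)` the values over `c` are a
rotated copy `z · μ_p` of the `p`-th roots of unity. The average of a continuous `φ` over
`z · μ_p` is a Riemann sum that tends to the Haar integral of `φ` uniformly in `z`, and the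
average over all triples is an average of these.
-/

open MeasureTheory Filter

noncomputable instance : MeasurableSpace Circle := borel _
instance : BorelSpace Circle := ⟨rfl⟩

/-- The normalized quadratic exponential sum
`S(M,b,c;p) = p^{-n/2} ∑_{x ∈ 𝔽_p^n} e_p(xᵀMx + bᵀx + c)`, where
`e_p(a) = exp(2πi·ã/p)` with `ã ∈ {0,…,p−1}` the integer representative of `a`. -/
noncomputable def quadExpSum (n p : ℕ) [Fact p.Prime]
    (M : Matrix (Fin n) (Fin n) (ZMod p)) (b : Fin n → ZMod p) (c : ZMod p) : ℂ :=
  (∑ x : Fin n → ZMod p,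
      Complex.exp (2 * Real.pi * Complex.I *
        (((dotProduct x (M.mulVec x) + dotProduct b x + c).val : ℕ) : ℂ) / p)) /
    (((p : ℝ) ^ ((n : ℝ) / 2) : ℝ) : ℂ)

/-- The set of triples `(M,b,c)` with `M` symmetric invertible, as a finset. -/
noncomputable def quadTriples (n p : ℕ) [Fact p.Prime] :
    Finset (Matrix (Fin n) (Fin n) (ZMod p) × (Fin n → ZMod p) × ZMod p) :=
  Finset.univ.filter (fun t => t.1.IsSymm ∧ IsUnit t.1.det)

open Finset Matrix
open scoped Real BigOperators

lemma AddChar.map_sum_eq_prod {A M ι : Type*} [AddCommMonoid A] [CommMonoid M]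
    (ψ : AddChar A M) (s : Finset ι) (f : ι → A) :
    ψ (∑ i ∈ s, f i) = ∏ i ∈ s, ψ (f i) := by
  induction s using Finset.cons_induction with
  | empty => simp
  | cons a s ha ih => rw [sum_cons, prod_cons, ψ.map_add_eq_mul, ih]

lemma Matrix.mulVec_eq_zero_iff_of_isUnit_det {R ι : Type*} [CommRing R] [Fintype ι]
    [DecidableEq ι] {A : Matrix ι ι R} (hA : IsUnit A.det) {v : ι → R} :
    A *ᵥ v = 0 ↔ v = 0 := by
  refine ⟨fun h => ?_, fun h => h ▸ mulVec_zero A⟩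
  rw [← one_mulVec v, ← nonsing_inv_mul A hA, ← mulVec_mulVec, h, mulVec_zero]

lemma Matrix.IsSymm.isUnit_det_add_transpose {R ι : Type*} [CommRing R] [Fintype ι]
    [DecidableEq ι] {M : Matrix ι ι R} (hM : M.IsSymm) (h2 : IsUnit (2 : R))
    (hdet : IsUnit M.det) : IsUnit (M + Mᵀ).det := by
  rw [hM.eq, ← two_smul R M, det_smul]
  exact (h2.pow _).mul hdet

section GaussSum

variable {R ι : Type*} [CommRing R] [Fintype ι]

lemma sum_addChar_dotProduct [DecidableEq ι] [Fintype R] [DecidableEq R] {ψ : AddChar R ℂ}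
    (hψ : ψ.IsPrimitive) (v : ι → R) :
    ∑ y : ι → R, ψ (v ⬝ᵥ y) = if v = 0 then (Fintype.card R : ℂ) ^ Fintype.card ι else 0 := by
  have hprod (y : ι → R) : ψ (v ⬝ᵥ y) = ∏ i, ψ (y i * v i) := by
    simp only [dotProduct, ψ.map_sum_eq_prod, mul_comm]
  simp only [hprod]
  rw [← Fintype.prod_sum (fun i r => ψ (r * v i))]
  simp only [AddChar.sum_mulShift _ hψ, apply_ite (Nat.cast : ℕ → ℂ), Nat.cast_zero,
    prod_ite_zero, prod_const, card_univ, mem_univ, true_implies, funext_iff, Pi.zero_apply]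

lemma quadratic_add_sub (M : Matrix ι ι R) (b : ι → R) (c : R) (y h : ι → R) :
    ((y + h) ⬝ᵥ M *ᵥ (y + h) + b ⬝ᵥ (y + h) + c) - (y ⬝ᵥ M *ᵥ y + b ⬝ᵥ y + c)
      = (h ⬝ᵥ M *ᵥ h + b ⬝ᵥ h) + ((M + Mᵀ) *ᵥ h) ⬝ᵥ y := by
  have : h ⬝ᵥ M *ᵥ y = (Mᵀ *ᵥ h) ⬝ᵥ y := by
    rw [dotProduct_mulVec, mulVec_transpose, dotProduct_comm]
  simp only [mulVec_add, dotProduct_add, add_dotProduct, add_mulVec, this]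
  rw [dotProduct_comm y (M *ᵥ h)]
  ring

theorem norm_sq_sum_addChar_quadratic [DecidableEq ι] [Fintype R] [DecidableEq R]
    {ψ : AddChar R ℂ} (hψ : ψ.IsPrimitive) {M : Matrix ι ι R} (hM : IsUnit (M + Mᵀ).det)
    (b : ι → R) (c : R) :
    ‖∑ x : ι → R, ψ (x ⬝ᵥ M *ᵥ x + b ⬝ᵥ x + c)‖ ^ 2 = (Fintype.card R : ℝ) ^ Fintype.card ι := by
  set Q : (ι → R) → R := fun x => x ⬝ᵥ M *ᵥ x + b ⬝ᵥ x + c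
  have key : (∑ x, ψ (Q x)) * starRingEnd ℂ (∑ x, ψ (Q x))
      = (Fintype.card R : ℂ) ^ Fintype.card ι :=
    calc (∑ x, ψ (Q x)) * starRingEnd ℂ (∑ x, ψ (Q x))
        = ∑ y, ∑ x, ψ (Q x - Q y) := by
          simp only [map_sum, sum_mul_sum, ← AddChar.map_neg_eq_conj, ← AddChar.map_add_eq_mul,
            sub_eq_add_neg]
          exact sum_comm
      _ = ∑ y, ∑ h, ψ (Q (y + h) - Q y) :=
          sum_congr rfl fun y _ => (Equiv.sum_comp (Equiv.addLeft y) _).symm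
      _ = ∑ h, ψ (h ⬝ᵥ M *ᵥ h + b ⬝ᵥ h) * ∑ y, ψ (((M + Mᵀ) *ᵥ h) ⬝ᵥ y) := by
          rw [sum_comm]
          simp only [Q, quadratic_add_sub, AddChar.map_add_eq_mul, mul_sum]
      _ = (Fintype.card R : ℂ) ^ Fintype.card ι := by
          simp only [sum_addChar_dotProduct hψ, mulVec_eq_zero_iff_of_isUnit_det hM, mul_ite,
            mul_zero, sum_ite_eq', mem_univ, if_true, dotProduct_zero, mulVec_zero, add_zero,
            AddChar.map_zero_eq_one, one_mul]
  exact_mod_cast (Complex.mul_conj' _).symm.trans key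

end GaussSum

section QuadExpSum

variable {n p : ℕ} [Fact p.Prime]

lemma quadExpSum_eq (M : Matrix (Fin n) (Fin n) (ZMod p)) (b : Fin n → ZMod p) (c : ZMod p) :
    quadExpSum n p M b c = (∑ x, ZMod.stdAddChar (x ⬝ᵥ M *ᵥ x + b ⬝ᵥ x + c)) /
      (((p : ℝ) ^ ((n : ℝ) / 2) : ℝ) : ℂ) := by
  simp only [quadExpSum, ZMod.stdAddChar_apply, ZMod.toCircle_apply]

lemma norm_quadExpSum (hp2 : p ≠ 2) {M : Matrix (Fin n) (Fin n) (ZMod p)} (hM : M.IsSymm)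
    (hdet : IsUnit M.det) (b : Fin n → ZMod p) (c : ZMod p) : ‖quadExpSum n p M b c‖ = 1 := by
  have h2 : IsUnit (2 : ZMod p) :=
    isUnit_iff_ne_zero.2 (Ring.two_ne_zero (by rwa [ZMod.ringChar_zmod_n]))
  have hsq := norm_sq_sum_addChar_quadratic (ZMod.isPrimitive_stdAddChar p)
    (hM.isUnit_det_add_transpose h2 hdet) b c
  rw [ZMod.card, Fintype.card_fin] at hsq
  have hp : (0 : ℝ) < p := mod_cast (Fact.out : p.Prime).pos
  rw [quadExpSum_eq, norm_div, Complex.norm_real, Real.norm_of_nonneg (by positivity),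
    div_eq_one_iff_eq (by positivity), Real.rpow_div_two_eq_sqrt _ hp.le, Real.rpow_natCast]
  refine (sq_eq_sq₀ (norm_nonneg _) (by positivity)).1 ?_
  rw [hsq, ← pow_mul, mul_comm, pow_mul, Real.sq_sqrt hp.le]

lemma quadExpSum_eq_toCircle_mul (M : Matrix (Fin n) (Fin n) (ZMod p)) (b : Fin n → ZMod p)
    (c : ZMod p) : quadExpSum n p M b c = ZMod.toCircle c * quadExpSum n p M b 0 := by
  simp only [quadExpSum_eq, add_zero, mul_div_assoc', mul_sum, ← ZMod.stdAddChar_apply,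
    ← AddChar.map_add_eq_mul, add_comm c]

end QuadExpSum

lemma Finset.norm_expect_le_of_forall_norm_le {ι : Type*} {s : Finset ι} (hs : s.Nonempty)
    {f : ι → ℂ} {ε : ℝ} (h : ∀ i ∈ s, ‖f i‖ ≤ ε) : ‖𝔼 i ∈ s, f i‖ ≤ ε :=
  (RCLike.norm_expect_le (K := ℂ)).trans (expect_le hs h)

lemma Finset.norm_expect_sub_le_of_forall_norm_sub_le {ι : Type*} {s : Finset ι}
    (hs : s.Nonempty) {f : ι → ℂ} {a : ℂ} {ε : ℝ} (h : ∀ i ∈ s, ‖f i - a‖ ≤ ε) :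
    ‖𝔼 i ∈ s, f i - a‖ ≤ ε := by
  rw [← expect_const hs a, ← expect_sub_distrib]
  exact norm_expect_le_of_forall_norm_le hs h

lemma norm_sub_integral_le_of_forall_norm_sub_le {X E : Type*} [MeasurableSpace X]
    [NormedAddCommGroup E] [NormedSpace ℝ E] [CompleteSpace E] {μ : Measure X}
    [IsProbabilityMeasure μ] {F : X → E} (hF : Integrable F μ) {z : X} {ε : ℝ}
    (h : ∀ w, ‖F z - F w‖ ≤ ε) : ‖F z - ∫ w, F w ∂μ‖ ≤ ε := by
  have hmean : F z - ∫ w, F w ∂μ = ∫ w, (F z - F w) ∂μ := by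
    rw [integral_sub (integrable_const _) hF, integral_const, probReal_univ, one_smul]
  simpa [hmean] using norm_integral_le_of_norm_le_const (μ := μ) (ae_of_all _ h)

namespace Circle

lemma dist_mul_right (a b c : Circle) : dist (a * c) (b * c) = dist a b := by
  change dist ((a * c : Circle) : ℂ) (b * c : Circle) = dist (a : ℂ) b
  rw [coe_mul, coe_mul, dist_eq_norm, dist_eq_norm, ← sub_mul, norm_mul, norm_coe, mul_one]

lemma dist_exp_le (s t : ℝ) : dist (exp s) (exp t) ≤ |s - t| :=
  calc dist (exp s) (exp t) = dist (exp (s - t) * exp t) (1 * exp t) := by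
        rw [← exp_add, sub_add_cancel, one_mul]
    _ = ‖Complex.exp (Complex.I * (s - t : ℝ)) - 1‖ := by
        rw [dist_mul_right, ← dist_eq_norm, mul_comm]; rfl
    _ ≤ |s - t| := Real.norm_exp_I_mul_ofReal_sub_one_le

end Circle

lemma ZMod.exists_dist_toCircle_le {N : ℕ} [NeZero N] (z : Circle) :
    ∃ k : ZMod N, dist z (toCircle k) ≤ 2 * π / N := by
  have hN : (0 : ℝ) < N := mod_cast (NeZero.pos N)
  set t : ℝ := Complex.arg z * N / (2 * π)
  refine ⟨(⌊t⌋ : ℤ), ?_⟩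
  have hk : toCircle ((⌊t⌋ : ℤ) : ZMod N) = Circle.exp (2 * π / N * ⌊t⌋) := by
    ext
    rw [toCircle_intCast, Circle.coe_exp]
    push_cast
    ring_nf
  have harg : Complex.arg z - 2 * π / N * ⌊t⌋ = 2 * π / N * Int.fract t := by
    simp only [t, Int.fract]
    field_simp
  rw [hk]
  nth_rewrite 1 [← Circle.exp_arg z]
  refine (Circle.dist_exp_le _ _).trans ?_
  rw [harg, abs_mul, abs_of_pos (by positivity), abs_of_nonneg (Int.fract_nonneg t)]
  exact mul_le_of_le_one_right (by positivity) (Int.fract_lt_one t).le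

/-- The average `F` of `g` over a coset of the `N`-th roots of unity is invariant under those
roots, and every point of the circle is within `2π/N` of such a root; so `F` oscillates by at most
`ε`, while its mean is the mean of `g`. -/
theorem norm_expect_mul_toCircle_sub_integral_le {N : ℕ} [NeZero N] (μ : Measure Circle)
    [IsProbabilityMeasure μ] [μ.IsMulRightInvariant] {g : Circle → ℂ} (hg : Continuous g)
    {δ ε : ℝ} (hgδ : ∀ a b, dist a b < δ → dist (g a) (g b) ≤ ε) (hN : 2 * π / N < δ)
    (z : Circle) : ‖𝔼 c : ZMod N, g (z * ZMod.toCircle c) - ∫ w, g w ∂μ‖ ≤ ε := by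
  set F : Circle → ℂ := fun v => 𝔼 c : ZMod N, g (v * ZMod.toCircle c)
  have hF_cont : Continuous F := by
    simp only [F, expect_eq_sum_div_card]
    fun_prop
  have hF_shift (v : Circle) (k : ZMod N) : F (v * ZMod.toCircle k) = F v :=
    Fintype.expect_equiv (Equiv.addLeft k) _ _ fun c => by
      simp only [Equiv.coe_addLeft, AddChar.map_add_eq_mul, mul_assoc]
  have hF_integral : ∫ v, F v ∂μ = ∫ w, g w ∂μ := by
    have hg_int (c : ZMod N) : Integrable (fun v => g (v * ZMod.toCircle c)) μ :=
      (hg.comp (continuous_mul_const _)).integrable_of_hasCompactSupport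
        (.of_compactSpace _)
    simp only [F, expect_eq_sum_div_card, integral_div, integral_finsetSum _ fun c _ => hg_int c,
      integral_mul_right_eq_self g, sum_const, card_univ, nsmul_eq_mul, ZMod.card]
    exact mul_div_cancel_left₀ _ (Nat.cast_ne_zero.2 (NeZero.ne N))
  have hF_osc (w : Circle) : ‖F z - F w‖ ≤ ε := by
    obtain ⟨k, hk⟩ := ZMod.exists_dist_toCircle_le (N := N) (z / w)
    rw [← hF_shift w k, ← expect_sub_distrib]
    refine norm_expect_le_of_forall_norm_le univ_nonempty fun c _ => ?_
    rw [← dist_eq_norm]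
    refine hgδ _ _ ?_
    rw [Circle.dist_mul_right, ← Circle.dist_mul_right z _ w⁻¹, mul_right_comm, mul_inv_cancel,
      one_mul, ← div_eq_mul_inv]
    exact hk.trans_lt hN
  rw [← hF_integral]
  exact norm_sub_integral_le_of_forall_norm_sub_le
    (hF_cont.integrable_of_hasCompactSupport (.of_compactSpace _)) hF_osc

lemma quadTriples_eq_product (n p : ℕ) [Fact p.Prime] :
    quadTriples n p = ({M | M.IsSymm ∧ IsUnit M.det} : Finset _) ×ˢ univ := by
  ext
  simp [quadTriples]

theorem norm_expect_quadTriples_sub_integral_le {n p : ℕ} [Fact p.Prime] (hp2 : p ≠ 2)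
    (μ : Measure Circle) [IsProbabilityMeasure μ] [μ.IsMulRightInvariant] {φ : ℂ → ℂ}
    (hφ : Continuous φ) {δ ε : ℝ} (hφδ : ∀ a b : Circle, dist a b < δ → dist (φ a) (φ b) ≤ ε)
    (hpδ : 2 * π / p < δ) :
    ‖𝔼 t ∈ quadTriples n p, φ (quadExpSum n p t.1 t.2.1 t.2.2) - ∫ z : Circle, φ z ∂μ‖ ≤ ε := by
  rw [quadTriples_eq_product, expect_product, ← univ_product_univ]
  refine norm_expect_sub_le_of_forall_norm_sub_le ⟨1, by simp [isSymm_one]⟩ fun M hM => ?_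
  obtain ⟨hsymm, hdet⟩ : M.IsSymm ∧ IsUnit M.det := by simpa using hM
  rw [expect_product]
  refine norm_expect_sub_le_of_forall_norm_sub_le univ_nonempty fun b _ => ?_
  let z : Circle := ⟨quadExpSum n p M b 0,
    mem_sphere_zero_iff_norm.2 (norm_quadExpSum hp2 hsymm hdet b 0)⟩
  have hz (c : ZMod p) : quadExpSum n p M b c = ↑(z * ZMod.toCircle c) := by
    rw [quadExpSum_eq_toCircle_mul, Circle.coe_mul, mul_comm]
  simp only [hz]
  exact norm_expect_mul_toCircle_sub_integral_le μ (hφ.comp continuous_subtype_val) hφδ hpδ z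

theorem quad_sums_equidistributed_general (n : ℕ) :
    (∀ (p : ℕ) (hp : p.Prime), p ≠ 2 →
      haveI : Fact p.Prime := ⟨hp⟩
      ∀ (M : Matrix (Fin n) (Fin n) (ZMod p)) (b : Fin n → ZMod p) (c : ZMod p),
        M.IsSymm → IsUnit M.det → ‖quadExpSum n p M b c‖ = 1) ∧
    (∀ φ : ℂ → ℂ, Continuous φ →
      ∀ μ : Measure Circle, μ.IsHaarMeasure → IsProbabilityMeasure μ →
        Tendsto
          (fun p : ℕ =>
            if hp : p.Prime then
              haveI : Fact p.Prime := ⟨hp⟩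
              (∑ t ∈ quadTriples n p, φ (quadExpSum n p t.1 t.2.1 t.2.2)) /
                ((quadTriples n p).card : ℂ)
            else 0)
          (atTop ⊓ 𝓟 {p : ℕ | p.Prime ∧ p ≠ 2})
          (nhds (∫ z : Circle, φ (z : ℂ) ∂μ))) := by
  refine ⟨fun p hp hp2 => ?_, fun φ hφ μ _ _ => ?_⟩
  · have := Fact.mk hp
    exact fun M b c hM hdet => norm_quadExpSum hp2 hM hdet b c
  rw [Metric.tendsto_nhds]
  intro ε hε
  have hg : Continuous fun z : Circle => φ z := hφ.comp continuous_subtype_val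
  obtain ⟨δ, hδ, hφδ⟩ := Metric.uniformContinuous_iff.1
    (CompactSpace.uniformContinuous_of_continuous hg) (ε / 2) (half_pos hε)
  have hlarge : ∀ᶠ p : ℕ in atTop, 2 * π / p < δ :=
    (tendsto_const_div_atTop_nhds_zero_nat (2 * π)).eventually (gt_mem_nhds hδ)
  filter_upwards [hlarge.filter_mono inf_le_left, mem_inf_of_right (mem_principal_self _)]
    with p hpδ ⟨hp, hp2⟩
  have := Fact.mk hp
  rw [dif_pos hp, ← expect_eq_sum_div_card, dist_eq_norm]
  exact (norm_expect_quadTriples_sub_integral_le hp2 μ hφ (fun a b h => (hφδ h).le) hpδ).trans_lt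
    (half_lt_self hε)

/-- Case `d = 2` of Corollary 7.9(1): each normalized quadratic exponential sum
`S(M,b,c;p)` has modulus `1`, and as `p → ∞` through (odd) primes the families
`(S(M,b,c;p))` become equidistributed in the unit circle with respect to the Haar
probability measure. -/
theorem quad_sums_equidistributed (n : ℕ) (hn : 1 ≤ n) :
    (∀ (p : ℕ) (hp : p.Prime), p ≠ 2 →
      haveI : Fact p.Prime := ⟨hp⟩
      ∀ (M : Matrix (Fin n) (Fin n) (ZMod p)) (b : Fin n → ZMod p) (c : ZMod p),
        M.IsSymm → IsUnit M.det → ‖quadExpSum n p M b c‖ = 1) ∧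
    (∀ φ : ℂ → ℂ, Continuous φ →
      ∀ μ : Measure Circle, μ.IsHaarMeasure → IsProbabilityMeasure μ →
        Tendsto
          (fun p : ℕ =>
            if hp : p.Prime then
              haveI : Fact p.Prime := ⟨hp⟩
              (∑ t ∈ quadTriples n p, φ (quadExpSum n p t.1 t.2.1 t.2.2)) /
                ((quadTriples n p).card : ℂ)
            else 0)
          (atTop ⊓ 𝓟 {p : ℕ | p.Prime ∧ p ≠ 2})
          (nhds (∫ z : Circle, φ (z : ℂ) ∂μ))) :=
  quad_sums_equidistributed_general n
end
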